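/- arXiv:1409.2286 — 8 statements merged into one kernel-verified Lean document; each statement's English description precedes it below -/
import Mathlib

section
/- Suppose the splitting condition holds with constants c, N, ε. Let μ and ν be probability measures on [0,1] with μ([0,x]) ≥ ν([0,x]) for all x ∈ [0,1]. Then 0 ≤ F_N^{(μ)}(r) − F_N^{(ν)}(r) for every r, and sup_r (F_N^{(μ)}(r) − F_N^{(ν)}(r)) ≤ (1 − ε) · sup_x (μ([0,x]) − ν([0,x])). -/
/-!
Since the update map is monotone, so is `x ↦ X_N^{(x)}`, and `G x := F_N^{(x)}(r)` is antitone
on `[0,1]`. By the layer-cake formula `∫ G dμ - ∫ G dν` integrates `(μ - ν)(S_t)` over the levels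
`t`, where each superlevel set `S_t = {G > t}` is a lower set of `ℝ`, i.e. (up to the support
`[0,1]`) a half-line, on which `μ - ν` lies in `[0, D]`. The splitting condition confines `G` to a
band `[m, m + 1 - ε]`: for `r ≥ c` every `X_N^{(x)}` is `≤ r` as soon as `X_N^{(1)} ≤ c`, so
`G ≥ ε₁`; for `r < c` it is `> r` as soon as `X_N^{(0)} ≥ c`, so `G ≤ 1 - ε₂`. Hence only levels in
an interval of length `1 - ε` contribute, and the difference lies in `[0, (1 - ε) D]`.
-/

open MeasureTheory ProbabilityTheory Set Filter Topology

open scoped ENNReal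

lemma IsLowerSet.exists_countable_biUnion_Iic {S : Set ℝ} (hS : IsLowerSet S) :
    ∃ T ⊆ S, T.Countable ∧ ⋃ s ∈ T, Iic s = S := by
  by_cases hmax : ∃ t, IsGreatest S t
  · obtain ⟨t, htS, ht⟩ := hmax
    refine ⟨{t}, singleton_subset_iff.2 htS, countable_singleton t, ?_⟩
    rw [biUnion_singleton]
    exact Subset.antisymm (fun x hx => hS hx htS) ht
  push Not at hmax
  -- Without a maximum, `S` is the open set `⋃ s ∈ S, Iio s`, which has a countable subcover.
  have hS_Iio : ⋃ s ∈ S, Iio s = S := by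
    refine Subset.antisymm (iUnion₂_subset fun s hs x hx => hS hx.le hs) fun x hx => ?_
    obtain ⟨y, hyS, hxy⟩ : ∃ y ∈ S, x < y := by
      simpa [IsGreatest, upperBounds, hx] using hmax x
    exact mem_biUnion hyS hxy
  obtain ⟨T, hTS, hTc, hT⟩ :=
    TopologicalSpace.isOpen_biUnion_countable S Iio fun s _ => isOpen_Iio
  refine ⟨T, hTS, hTc, Subset.antisymm (iUnion₂_subset fun s hs x hx => hS hx (hTS hs)) ?_⟩
  rw [← hS_Iio, ← hT]
  exact biUnion_mono subset_rfl fun s _ => Iio_subset_Iic_self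

lemma IsLowerSet.measure_le_add_of_forall_Iic {μ ν : Measure ℝ} {δ : ℝ≥0∞}
    (h : ∀ s, μ (Iic s) ≤ ν (Iic s) + δ) {S : Set ℝ} (hS : IsLowerSet S) :
    μ S ≤ ν S + δ := by
  obtain ⟨T, hTS, hTc, hT⟩ := hS.exists_countable_biUnion_Iic
  have : Countable T := hTc.to_subtype
  have hmono : Monotone fun s : T => Iic (s : ℝ) := fun s t hst => Iic_subset_Iic.2 hst
  calc μ S = ⨆ s : T, μ (Iic (s : ℝ)) := by
        rw [← hT, biUnion_eq_iUnion, hmono.directed_le.measure_iUnion]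
    _ ≤ ν S + δ := iSup_le fun s =>
        (h s).trans (by gcongr; exact fun x hx => hS hx (hTS s.2))

lemma Antitone.lintegral_le_add_of_forall_Iic {μ ν : Measure ℝ} {δ : ℝ≥0∞}
    (h : ∀ s, μ (Iic s) ≤ ν (Iic s) + δ) {K : ℝ → ℝ} (hK : Antitone K) (hK0 : 0 ≤ K)
    {M : ℝ} (hKM : ∀ x, K x ≤ M) :
    ∫⁻ x, ENNReal.ofReal (K x) ∂μ ≤ ∫⁻ x, ENNReal.ofReal (K x) ∂ν + ENNReal.ofReal M * δ := by
  have hlevel : ∀ t,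
      μ {x | t < K x} ≤ ν {x | t < K x} + (Iio M).indicator (fun _ => δ) t := by
    intro t
    by_cases ht : t < M
    · rw [indicator_of_mem (mem_Iio.2 ht)]
      exact IsLowerSet.measure_le_add_of_forall_Iic h fun a b hba hb => hb.trans_le (hK hba)
    · have : {x | t < K x} = ∅ :=
        eq_empty_of_forall_notMem fun x hx => ht (hx.trans_le (hKM x))
      simp [this]
  rw [lintegral_eq_lintegral_meas_lt μ (ae_of_all _ hK0) hK.measurable.aemeasurable,
    lintegral_eq_lintegral_meas_lt ν (ae_of_all _ hK0) hK.measurable.aemeasurable]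
  calc ∫⁻ t in Ioi 0, μ {x | t < K x}
      ≤ ∫⁻ t in Ioi 0, (ν {x | t < K x} + (Iio M).indicator (fun _ => δ) t) :=
        lintegral_mono hlevel
    _ = (∫⁻ t in Ioi 0, ν {x | t < K x}) + ENNReal.ofReal M * δ := by
        rw [lintegral_add_right _ (measurable_const.indicator measurableSet_Iio),
          lintegral_indicator_const measurableSet_Iio, Measure.restrict_apply measurableSet_Iio,
          Iio_inter_Ioi, Real.volume_Ioo, sub_zero, mul_comm]

lemma Antitone.integral_le_add_of_forall_Iic {μ ν : Measure ℝ} [IsProbabilityMeasure μ]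
    [IsProbabilityMeasure ν] {δ : ℝ} (hδ : 0 ≤ δ)
    (h : ∀ s, μ.real (Iic s) ≤ ν.real (Iic s) + δ)
    {K : ℝ → ℝ} (hK : Antitone K) {m M : ℝ} (hKmM : ∀ x, K x ∈ Icc m (m + M)) :
    ∫ x, K x ∂μ ≤ ∫ x, K x ∂ν + M * δ := by
  have h' : ∀ s, μ (Iic s) ≤ ν (Iic s) + ENNReal.ofReal δ := fun s => by
    rw [← ofReal_measureReal, ← ofReal_measureReal, ← ENNReal.ofReal_add measureReal_nonneg hδ]
    exact ENNReal.ofReal_le_ofReal (h s)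
  set L : ℝ → ℝ := fun x => K x - m
  have hL : Antitone L := fun a b hab => sub_le_sub_right (hK hab) m
  have hL0 : 0 ≤ L := fun x => sub_nonneg.2 (hKmM x).1
  have hLM : ∀ x, L x ≤ M := fun x => by linarith [(hKmM x).2]
  have hM : 0 ≤ M := (hL0 0).trans (hLM 0)
  have hKint : ∀ ρ : Measure ℝ, [IsFiniteMeasure ρ] → Integrable K ρ := fun ρ _ =>
    .of_bound hK.measurable.aestronglyMeasurable _
      (ae_of_all _ fun x => abs_le_max_abs_abs (hKmM x).1 (hKmM x).2)
  have hLint : ∀ ρ : Measure ℝ, [IsFiniteMeasure ρ] → Integrable L ρ :=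
    fun ρ _ => (hKint ρ).sub (integrable_const m)
  have hLK : ∀ ρ : Measure ℝ, [IsProbabilityMeasure ρ] → ∫ x, L x ∂ρ = ∫ x, K x ∂ρ - m :=
    fun ρ _ => by simp [L, integral_sub (hKint ρ) (integrable_const m)]
  have hLμν : ∫ x, L x ∂μ ≤ ∫ x, L x ∂ν + M * δ := by
    rw [← ENNReal.ofReal_le_ofReal_iff (add_nonneg (integral_nonneg hL0) (mul_nonneg hM hδ)),
      ENNReal.ofReal_add (integral_nonneg hL0) (mul_nonneg hM hδ), ENNReal.ofReal_mul hM,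
      ofReal_integral_eq_lintegral_ofReal (hLint μ) (ae_of_all _ hL0),
      ofReal_integral_eq_lintegral_ofReal (hLint ν) (ae_of_all _ hL0)]
    exact hL.lintegral_le_add_of_forall_Iic h' hL0 hLM
  rw [hLK μ, hLK ν] at hLμν
  linarith

lemma measure_Iic_eq_measure_Icc_min {μ : Measure ℝ} (hμ : ∀ᵐ x ∂μ, x ∈ Icc (0:ℝ) 1)
    (s : ℝ) : μ (Iic s) = μ (Icc 0 (min s 1)) := by
  rw [← measure_inter_conull (t := Icc (0:ℝ) 1) hμ]
  congr 1
  ext x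
  simp only [mem_inter_iff, mem_Iic, mem_Icc, le_min_iff]
  tauto

lemma measureReal_Iic_le_add_of_Icc {μ ν : Measure ℝ} (hμ : ∀ᵐ x ∂μ, x ∈ Icc (0:ℝ) 1)
    (hν : ∀ᵐ x ∂ν, x ∈ Icc (0:ℝ) 1) {δ : ℝ} (hδ : 0 ≤ δ)
    (h : ∀ x ∈ Icc (0:ℝ) 1, μ.real (Icc 0 x) ≤ ν.real (Icc 0 x) + δ) (s : ℝ) :
    μ.real (Iic s) ≤ ν.real (Iic s) + δ := by
  simp only [measureReal_def, measure_Iic_eq_measure_Icc_min hμ,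
    measure_Iic_eq_measure_Icc_min hν]
  by_cases hs : 0 ≤ min s 1
  · exact h _ ⟨hs, min_le_right s 1⟩
  · simp [Icc_eq_empty hs, hδ]

lemma measureReal_Icc_sub_le_iSup {μ ν : Measure ℝ} [IsFiniteMeasure μ] {x : ℝ}
    (hx : x ∈ Icc (0:ℝ) 1) :
    μ.real (Icc 0 x) - ν.real (Icc 0 x) ≤
      ⨆ y : Icc (0:ℝ) 1, (μ.real (Icc 0 (y : ℝ)) - ν.real (Icc 0 (y : ℝ))) :=
  le_ciSup (f := fun y : Icc (0:ℝ) 1 => μ.real (Icc 0 (y : ℝ)) - ν.real (Icc 0 (y : ℝ)))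
    ⟨μ.real univ, by
      rintro _ ⟨y, rfl⟩
      linarith [measureReal_mono (μ := μ) (subset_univ (Icc 0 (y : ℝ))),
        measureReal_nonneg (μ := ν) (s := Icc 0 (y : ℝ))]⟩ ⟨x, hx⟩

lemma AntitoneOn.integral_le_add_of_forall_Icc {μ ν : Measure ℝ} [IsProbabilityMeasure μ]
    [IsProbabilityMeasure ν] (hμ : ∀ᵐ x ∂μ, x ∈ Icc (0:ℝ) 1) (hν : ∀ᵐ x ∂ν, x ∈ Icc (0:ℝ) 1)
    {δ : ℝ} (hδ : 0 ≤ δ) (h : ∀ x ∈ Icc (0:ℝ) 1, μ.real (Icc 0 x) ≤ ν.real (Icc 0 x) + δ)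
    {G : ℝ → ℝ} (hG : AntitoneOn G (Icc 0 1)) {m M : ℝ}
    (hGmM : ∀ x ∈ Icc (0:ℝ) 1, G x ∈ Icc m (m + M)) :
    ∫ x, G x ∂μ ≤ ∫ x, G x ∂ν + M * δ := by
  set G₀ : Icc (0:ℝ) 1 → ℝ := fun x => G x
  have hG₀ : Antitone G₀ := fun a b hab => hG a.2 b.2 hab
  set K := IccExtend zero_le_one G₀
  have hK : Antitone K := hG₀.comp_monotone (monotone_projIcc _)
  have hGK : ∀ ρ : Measure ℝ, (∀ᵐ x ∂ρ, x ∈ Icc (0:ℝ) 1) → ∫ x, G x ∂ρ = ∫ x, K x ∂ρ :=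
    fun ρ hρ => integral_congr_ae <|
      hρ.mono fun x hx => (IccExtend_of_mem zero_le_one G₀ hx).symm
  rw [hGK μ hμ, hGK ν hν]
  exact hK.integral_le_add_of_forall_Iic hδ (measureReal_Iic_le_add_of_Icc hμ hν hδ h)
    fun x => hGmM _ (projIcc 0 1 zero_le_one x).2

section Orbit

variable {Ω V : Type*} {f : ℝ → V → ℝ} {ξ : ℕ → Ω → V} {X : ℝ → ℕ → Ω → ℝ}

lemma orbit_mem_Icc (hf_range : ∀ x ∈ Icc (0:ℝ) 1, ∀ v : V, f x v ∈ Icc (0:ℝ) 1)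
    (hX0 : ∀ x ω, X x 0 ω = x) (hXrec : ∀ x t ω, X x (t + 1) ω = f (X x t ω) (ξ t ω))
    {x : ℝ} (hx : x ∈ Icc (0:ℝ) 1) (t : ℕ) (ω : Ω) : X x t ω ∈ Icc (0:ℝ) 1 := by
  induction t with
  | zero => rwa [hX0]
  | succ t ih => rw [hXrec]; exact hf_range _ ih _

lemma orbit_monotoneOn (hf_range : ∀ x ∈ Icc (0:ℝ) 1, ∀ v : V, f x v ∈ Icc (0:ℝ) 1)
    (hf_mono : ∀ v : V, ∀ x₁ ∈ Icc (0:ℝ) 1, ∀ x₂ ∈ Icc (0:ℝ) 1, x₁ ≤ x₂ → f x₁ v ≤ f x₂ v)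
    (hX0 : ∀ x ω, X x 0 ω = x) (hXrec : ∀ x t ω, X x (t + 1) ω = f (X x t ω) (ξ t ω))
    (t : ℕ) (ω : Ω) : MonotoneOn (fun x => X x t ω) (Icc 0 1) := by
  intro x₁ h₁ x₂ h₂ hx
  induction t with
  | zero => simpa only [hX0] using hx
  | succ t ih =>
    simp only [hXrec]
    exact hf_mono _ _ (orbit_mem_Icc hf_range hX0 hXrec h₁ t ω) _
      (orbit_mem_Icc hf_range hX0 hXrec h₂ t ω) ih

lemma orbit_measurable [MeasurableSpace Ω] [MeasurableSpace V] (hξ : ∀ t, Measurable (ξ t))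
    (hf : Measurable (Function.uncurry f)) (hX0 : ∀ x ω, X x 0 ω = x)
    (hXrec : ∀ x t ω, X x (t + 1) ω = f (X x t ω) (ξ t ω)) (x : ℝ) (t : ℕ) :
    Measurable (X x t) := by
  induction t with
  | zero => simpa only [funext (hX0 x)] using measurable_const
  | succ t ih =>
    rw [funext (hXrec x t)]
    exact hf.comp (ih.prodMk (hξ t))

end Orbit

section MonotoneFamily

variable {Ω : Type*} [MeasurableSpace Ω] (P : Measure Ω) {Y : ℝ → Ω → ℝ}

lemma antitoneOn_measureReal_le_of_monotoneOn [IsFiniteMeasure P] {s : Set ℝ}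
    (hY : ∀ ω, MonotoneOn (fun x => Y x ω) s) (r : ℝ) :
    AntitoneOn (fun x => P.real {ω | Y x ω ≤ r}) s :=
  fun _ hx _ hy hxy => measureReal_mono fun ω hω => (hY ω hx hy hxy).trans hω

lemma exists_measureReal_le_mem_Icc_of_monotoneOn [IsProbabilityMeasure P]
    (hY : ∀ ω, MonotoneOn (fun x => Y x ω) (Icc 0 1)) (hY0 : Measurable (Y 0)) (c r : ℝ) :
    ∃ m, ∀ x ∈ Icc (0:ℝ) 1, P.real {ω | Y x ω ≤ r} ∈
      Icc m (m + (1 - min (P.real {ω | Y 1 ω ≤ c}) (P.real {ω | c ≤ Y 0 ω}))) := by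
  have h0 : (0:ℝ) ∈ Icc (0:ℝ) 1 := ⟨le_rfl, zero_le_one⟩
  have h1 : (1:ℝ) ∈ Icc (0:ℝ) 1 := ⟨zero_le_one, le_rfl⟩
  rcases le_or_gt c r with hcr | hrc
  · refine ⟨P.real {ω | Y 1 ω ≤ c}, fun x hx => ⟨?_, ?_⟩⟩
    · exact measureReal_mono fun ω hω => (hY ω hx h1 hx.2).trans (hω.trans hcr)
    · linarith [measureReal_le_one (μ := P) (s := {ω | Y x ω ≤ r}),
        min_le_left (P.real {ω | Y 1 ω ≤ c}) (P.real {ω | c ≤ Y 0 ω})]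
  · refine ⟨0, fun x hx => ⟨measureReal_nonneg, ?_⟩⟩
    have hsub : {ω | Y x ω ≤ r} ⊆ {ω | c ≤ Y 0 ω}ᶜ := fun ω hω =>
      not_le.2 (((hY ω h0 hx hx.1).trans hω).trans_lt hrc)
    have := measureReal_mono (μ := P) hsub
    rw [probReal_compl_eq_one_sub (measurableSet_le measurable_const hY0)] at this
    linarith [min_le_right (P.real {ω | Y 1 ω ≤ c}) (P.real {ω | c ≤ Y 0 ω})]

end MonotoneFamily

theorem stmt2_general
    {Ω : Type*} [MeasurableSpace Ω] {V : Type*} [MeasurableSpace V]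
    (Pr : Measure Ω) [IsProbabilityMeasure Pr]
    (ξ : ℕ → Ω → V) (hξ_meas : ∀ t, Measurable (ξ t))
    (f : ℝ → V → ℝ) (hf_meas : Measurable (Function.uncurry f))
    (hf_range : ∀ x ∈ Icc (0:ℝ) 1, ∀ v : V, f x v ∈ Icc (0:ℝ) 1)
    (hf_mono : ∀ v : V, ∀ x₁ ∈ Icc (0:ℝ) 1, ∀ x₂ ∈ Icc (0:ℝ) 1, x₁ ≤ x₂ → f x₁ v ≤ f x₂ v)
    (X : ℝ → ℕ → Ω → ℝ)
    (hX0 : ∀ x ω, X x 0 ω = x)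
    (hXrec : ∀ x t ω, X x (t + 1) ω = f (X x t ω) (ξ t ω))
    -- splitting condition
    (c : ℝ) (N : ℕ)
    -- stochastically ordered initial distributions on [0,1]
    (μ ν : Measure ℝ) (hμ_prob : IsProbabilityMeasure μ) (hν_prob : IsProbabilityMeasure ν)
    (hμ_supp : μ (Icc (0:ℝ) 1) = 1) (hν_supp : ν (Icc (0:ℝ) 1) = 1)
    (hdom : ∀ x ∈ Icc (0:ℝ) 1, ν (Icc 0 x) ≤ μ (Icc 0 x)) :
    ∀ r : ℝ,
      0 ≤ (∫ x, (Pr {ω | X x N ω ≤ r}).toReal ∂μ) - (∫ x, (Pr {ω | X x N ω ≤ r}).toReal ∂ν) ∧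
      (∫ x, (Pr {ω | X x N ω ≤ r}).toReal ∂μ) - (∫ x, (Pr {ω | X x N ω ≤ r}).toReal ∂ν) ≤
        (1 - min (Pr {ω | X 1 N ω ≤ c}).toReal (Pr {ω | c ≤ X 0 N ω}).toReal) *
          ⨆ x : Icc (0:ℝ) 1, ((μ (Icc 0 (x : ℝ))).toReal - (ν (Icc 0 (x : ℝ))).toReal) := by
  intro r
  simp only [← measureReal_def]
  have hX := orbit_monotoneOn hf_range hf_mono hX0 hXrec N
  have hG := antitoneOn_measureReal_le_of_monotoneOn Pr hX r
  obtain ⟨m, hband⟩ := exists_measureReal_le_mem_Icc_of_monotoneOn Pr hX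
    (orbit_measurable hξ_meas hf_meas hX0 hXrec 0 N) c r
  have hμ : ∀ᵐ x ∂μ, x ∈ Icc (0:ℝ) 1 := (prob_compl_eq_zero_iff measurableSet_Icc).2 hμ_supp
  have hν : ∀ᵐ x ∂ν, x ∈ Icc (0:ℝ) 1 := (prob_compl_eq_zero_iff measurableSet_Icc).2 hν_supp
  have hD : 0 ≤ ⨆ x : Icc (0:ℝ) 1, (μ.real (Icc 0 (x : ℝ)) - ν.real (Icc 0 (x : ℝ))) := by
    have h1 : μ.real (Icc 0 1) = ν.real (Icc 0 1) := by
      simp [measureReal_def, hμ_supp, hν_supp]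
    linarith [measureReal_Icc_sub_le_iSup (μ := μ) (ν := ν) (x := 1) ⟨zero_le_one, le_rfl⟩]
  constructor
  · have := hG.integral_le_add_of_forall_Icc hν hμ le_rfl (fun x hx => by
      rw [add_zero]; exact ENNReal.toReal_mono (measure_ne_top μ _) (hdom x hx)) hband
    linarith
  · have := hG.integral_le_add_of_forall_Icc hμ hν hD (fun x hx => by
      linarith [measureReal_Icc_sub_le_iSup (μ := μ) (ν := ν) hx]) hband
    linarith

/-- **one-step contraction in the proof of Theorem 1.**
Under the splitting condition with constants `c`, `N`, `ε = min(ε₁,ε₂)`, if `μ` and `ν` are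
probability measures on `[0,1]` with `μ([0,x]) ≥ ν([0,x])` for all `x ∈ [0,1]`, then
`0 ≤ F_N^{(μ)}(r) − F_N^{(ν)}(r)` for every `r`, and
`sup_r (F_N^{(μ)}(r) − F_N^{(ν)}(r)) ≤ (1 − ε) · sup_x (μ([0,x]) − ν([0,x]))`.
Here `F_N^{(μ)}(r) = ∫ F_N^{(x)}(r) dμ(x)` is the distribution function of `X_N` started
from `X₀ ∼ μ` independent of the drivers. -/
theorem stmt2
    {Ω : Type*} [MeasurableSpace Ω] {V : Type*} [MeasurableSpace V]
    (Pr : Measure Ω) [IsProbabilityMeasure Pr]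
    (ξ : ℕ → Ω → V) (hξ_meas : ∀ t, Measurable (ξ t))
    (hξ_indep : iIndepFun ξ Pr)
    (hξ_ident : ∀ t, Measure.map (ξ t) Pr = Measure.map (ξ 0) Pr)
    (f : ℝ → V → ℝ) (hf_meas : Measurable (Function.uncurry f))
    (hf_range : ∀ x ∈ Icc (0:ℝ) 1, ∀ v : V, f x v ∈ Icc (0:ℝ) 1)
    (hf_mono : ∀ v : V, ∀ x₁ ∈ Icc (0:ℝ) 1, ∀ x₂ ∈ Icc (0:ℝ) 1, x₁ ≤ x₂ → f x₁ v ≤ f x₂ v)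
    (X : ℝ → ℕ → Ω → ℝ)
    (hX0 : ∀ x ω, X x 0 ω = x)
    (hXrec : ∀ x t ω, X x (t + 1) ω = f (X x t ω) (ξ t ω))
    -- splitting condition
    (c : ℝ) (hc : c ∈ Icc (0:ℝ) 1) (N : ℕ) (hN : 1 ≤ N)
    (hsplit1 : 0 < Pr {ω | X 1 N ω ≤ c})
    (hsplit2 : 0 < Pr {ω | c ≤ X 0 N ω})
    -- stochastically ordered initial distributions on [0,1]
    (μ ν : Measure ℝ) (hμ_prob : IsProbabilityMeasure μ) (hν_prob : IsProbabilityMeasure ν)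
    (hμ_supp : μ (Icc (0:ℝ) 1) = 1) (hν_supp : ν (Icc (0:ℝ) 1) = 1)
    (hdom : ∀ x ∈ Icc (0:ℝ) 1, ν (Icc 0 x) ≤ μ (Icc 0 x)) :
    ∀ r : ℝ,
      0 ≤ (∫ x, (Pr {ω | X x N ω ≤ r}).toReal ∂μ) - (∫ x, (Pr {ω | X x N ω ≤ r}).toReal ∂ν) ∧
      (∫ x, (Pr {ω | X x N ω ≤ r}).toReal ∂μ) - (∫ x, (Pr {ω | X x N ω ≤ r}).toReal ∂ν) ≤
        (1 - min (Pr {ω | X 1 N ω ≤ c}).toReal (Pr {ω | c ≤ X 0 N ω}).toReal) *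
          ⨆ x : Icc (0:ℝ) 1, ((μ (Icc 0 (x : ℝ))).toReal - (ν (Icc 0 (x : ℝ))).toReal) :=
  stmt2_general Pr ξ hξ_meas f hf_meas hf_range hf_mono X hX0 hXrec c N μ ν hμ_prob hν_prob hμ_supp
    hν_supp hdom
end

section
/- Suppose the splitting condition holds with constants c, N, ε. Then for every integer k ≥ 1 and every r ∈ ℝ, 0 ≤ F_{kN}^{(0)}(r) − F_{kN}^{(1)}(r) ≤ (1 − ε)^k. -/
/-!
Conditioning on the first `N` steps gives `F_{N+n}^{(x)}(r) = E[G(X_N^{(x)})]` with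
`G(y) = F_n^{(y)}(r)`, and `G` is antitone on `[0,1]` because `f` is monotone. Hence
`G(X_N^{(0)}) ≤ G(c)` on `{c ≤ X_N^{(0)}}` and `≤ G(0)` elsewhere, while `G(X_N^{(1)}) ≥ G(c)` on
`{X_N^{(1)} ≤ c}` and `≥ G(1)` elsewhere. Subtracting, the gap `G(0) - G(1)` shrinks by at least
the factor `1 - ε`, and iterating from `F_0^{(0)} - F_0^{(1)} ≤ 1` gives `(1 - ε)^k`.
-/

open MeasureTheory ProbabilityTheory Set

def randomIterate {α V : Type*} (f : α → V → α) (x : α) (w : ℕ → V) : ℕ → α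
  | 0 => x
  | t + 1 => f (randomIterate f x w t) (w t)

section Deterministic

variable {α V : Type*} {f : α → V → α}

lemma randomIterate_add (x : α) (w : ℕ → V) (m n : ℕ) :
    randomIterate f x w (m + n) =
      randomIterate f (randomIterate f x w m) (fun i ↦ w (m + i)) n := by
  induction n with
  | zero => rfl
  | succ n ih => rw [← Nat.add_assoc, randomIterate, ih]; rfl

lemma randomIterate_mem {s : Set α} (hf : ∀ x ∈ s, ∀ v, f x v ∈ s) {x : α} (hx : x ∈ s)
    (w : ℕ → V) : ∀ t, randomIterate f x w t ∈ s
  | 0 => hx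
  | t + 1 => hf _ (randomIterate_mem hf hx w t) _

lemma monotoneOn_randomIterate [Preorder α] {s : Set α} (hf : ∀ x ∈ s, ∀ v, f x v ∈ s)
    (hmono : ∀ v, MonotoneOn (f · v) s) (w : ℕ → V) :
    ∀ t, MonotoneOn (fun x ↦ randomIterate f x w t) s
  | 0 => fun _ _ _ _ h ↦ h
  | t + 1 => fun _ ha _ hb h ↦ hmono _ (randomIterate_mem hf ha w t) (randomIterate_mem hf hb w t)
      (monotoneOn_randomIterate hf hmono w t ha hb h)

variable [MeasurableSpace α] [MeasurableSpace V]

lemma measurable_randomIterate (hf : Measurable (Function.uncurry f)) :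
    ∀ t, Measurable fun p : α × (ℕ → V) ↦ randomIterate f p.1 p.2 t
  | 0 => measurable_fst
  | t + 1 => hf.comp ((measurable_randomIterate hf t).prodMk
      ((measurable_pi_apply t).comp measurable_snd))

end Deterministic

section Probability

variable {Ω V α : Type*} [mV : MeasurableSpace V] [MeasurableSpace α] {f : α → V → α}
  {ξ : ℕ → Ω → V}

lemma measurable_randomIterate_iSup_comap (hf : Measurable (Function.uncurry f)) (x : α)
    (t : ℕ) : Measurable[⨆ i ∈ Iio t, mV.comap (ξ i)] fun ω ↦ randomIterate f x (ξ · ω) t := by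
  induction t with
  | zero => exact measurable_const
  | succ t ih =>
    set m : MeasurableSpace Ω := ⨆ i ∈ Iio (t + 1), mV.comap (ξ i)
    have hX : Measurable[m] fun ω ↦ randomIterate f x (ξ · ω) t :=
      ih.mono (biSup_mono fun i hi ↦ lt_trans hi t.lt_succ_self) le_rfl
    have hξt : Measurable[m] (ξ t) := Measurable.of_comap_le
      (le_biSup (fun i ↦ mV.comap (ξ i)) (show t ∈ Iio (t + 1) from t.lt_succ_self))
    have hpair : Measurable[m] fun ω ↦ (randomIterate f x (ξ · ω) t, ξ t ω) := hX.prodMk hξt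
    exact hf.comp hpair

lemma measurable_shift_iSup_comap (m : ℕ) :
    Measurable[⨆ i ∈ Ici m, mV.comap (ξ i)] fun ω i ↦ ξ (m + i) ω :=
  @measurable_pi_lambda _ _ _ (⨆ i ∈ Ici m, mV.comap (ξ i)) _ _ fun i ↦ Measurable.of_comap_le
    (le_biSup (fun j ↦ mV.comap (ξ j)) (show m + i ∈ Ici m from Nat.le_add_right m i))

variable [MeasurableSpace Ω]

structure IsIIDSeq (ξ : ℕ → Ω → V) (P : Measure Ω) : Prop where
  measurable : ∀ t, Measurable (ξ t)
  iIndepFun : iIndepFun ξ P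
  map_eq : ∀ t, P.map (ξ t) = P.map (ξ 0)

variable {P : Measure Ω}

lemma IsIIDSeq.map_shift_eq [IsProbabilityMeasure P] (h : IsIIDSeq ξ P) (m : ℕ) :
    P.map (fun ω i ↦ ξ (m + i) ω) = P.map (fun ω i ↦ ξ i ω) := by
  have (t : ℕ) : IsProbabilityMeasure (P.map (ξ t)) :=
    Measure.isProbabilityMeasure_map (h.measurable t).aemeasurable
  rw [(h.iIndepFun.precomp (add_right_injective m)).map_fun_eq_infinitePi_map
    (fun i ↦ h.measurable _), h.iIndepFun.map_fun_eq_infinitePi_map h.measurable]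
  simp only [h.map_eq]

lemma IsIIDSeq.indepFun_randomIterate_shift (h : IsIIDSeq ξ P)
    (hf : Measurable (Function.uncurry f)) (x : α) (m : ℕ) :
    IndepFun (fun ω ↦ randomIterate f x (ξ · ω) m) (fun ω i ↦ ξ (m + i) ω) P := by
  have hind := indep_iSup_of_disjoint (fun i ↦ (h.measurable i).comap_le) h.iIndepFun.iIndep
    (Iio_disjoint_Ici (le_refl m))
  exact (IndepFun_iff_Indep _ _ _).2 <| indep_of_indep_of_le_right
    (indep_of_indep_of_le_left hind (measurable_randomIterate_iSup_comap hf x m).comap_le)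
    (measurable_shift_iSup_comap m).comap_le

lemma measurable_randomIterate_comp (hξ : ∀ t, Measurable (ξ t))
    (hf : Measurable (Function.uncurry f)) (x : α) (t : ℕ) :
    Measurable fun ω ↦ randomIterate f x (ξ · ω) t :=
  (measurable_randomIterate hf t).comp (measurable_const.prodMk (measurable_pi_lambda _ hξ))

lemma measurable_measure_randomIterate_mem [IsFiniteMeasure P] (hξ : ∀ t, Measurable (ξ t))
    (hf : Measurable (Function.uncurry f)) {s : Set α} (hs : MeasurableSet s) (n : ℕ) :
    Measurable fun y ↦ P {ω | randomIterate f y (ξ · ω) n ∈ s} := by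
  have hS := measurable_randomIterate hf n hs
  have hZ : Measurable fun ω i ↦ ξ i ω := measurable_pi_lambda _ hξ
  convert measurable_measure_prodMk_left (ν := P.map fun ω i ↦ ξ i ω) hS using 1
  funext y
  exact (Measure.map_apply hZ (measurable_prodMk_left hS)).symm

lemma IsIIDSeq.measure_randomIterate_add_mem [IsProbabilityMeasure P] (h : IsIIDSeq ξ P)
    (hf : Measurable (Function.uncurry f)) {s : Set α} (hs : MeasurableSet s) (x : α)
    (m n : ℕ) :
    P {ω | randomIterate f x (ξ · ω) (m + n) ∈ s} =
      ∫⁻ ω, P {ω' | randomIterate f (randomIterate f x (ξ · ω) m) (ξ · ω') n ∈ s} ∂P := by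
  set S := {p : α × (ℕ → V) | randomIterate f p.1 p.2 n ∈ s}
  have hS : MeasurableSet S := measurable_randomIterate hf n hs
  set Y := fun ω ↦ randomIterate f x (ξ · ω) m
  set Z := fun ω i ↦ ξ i ω
  have hZ : Measurable Z := measurable_pi_lambda _ h.measurable
  have hW : Measurable fun ω i ↦ ξ (m + i) ω := measurable_pi_lambda _ fun i ↦ h.measurable _
  have hY : Measurable Y := measurable_randomIterate_comp h.measurable hf x m
  have hmap := (indepFun_iff_map_prod_eq_prod_map_map hY.aemeasurable hW.aemeasurable).1
    (h.indepFun_randomIterate_shift hf x m)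
  calc P {ω | randomIterate f x (ξ · ω) (m + n) ∈ s}
      = P ((fun ω ↦ (Y ω, fun i ↦ ξ (m + i) ω)) ⁻¹' S) := by
        simp only [randomIterate_add]; rfl
    _ = ((P.map Y).prod (P.map Z)) S := by
        rw [← h.map_shift_eq m, ← hmap, Measure.map_apply (hY.prodMk hW) hS]
    _ = ∫⁻ y, P.map Z (Prod.mk y ⁻¹' S) ∂P.map Y := Measure.prod_apply hS
    _ = ∫⁻ ω, P.map Z (Prod.mk (Y ω) ⁻¹' S) ∂P :=
        lintegral_map (measurable_measure_prodMk_left hS) hY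
    _ = _ := lintegral_congr fun ω ↦ Measure.map_apply hZ (measurable_prodMk_left hS)

end Probability

section Integral

variable {Ω : Type*} [MeasurableSpace Ω] {μ : Measure Ω} [IsFiniteMeasure μ] {g : Ω → ℝ}
  {A : Set Ω} {a b : ℝ}

lemma integral_le_mul_add_mul_compl (hg : Integrable g μ) (hA : MeasurableSet A)
    (ha : ∀ ω ∈ A, g ω ≤ a) (hb : ∀ ω ∈ Aᶜ, g ω ≤ b) :
    ∫ ω, g ω ∂μ ≤ a * μ.real A + b * μ.real Aᶜ := by
  have hA' := setIntegral_mono_on hg.integrableOn (integrableOn_const (C := a)) hA ha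
  have hb' := setIntegral_mono_on hg.integrableOn (integrableOn_const (C := b)) hA.compl hb
  rw [setIntegral_const, smul_eq_mul] at hA' hb'
  linarith [integral_add_compl hA hg]

lemma mul_add_mul_compl_le_integral (hg : Integrable g μ) (hA : MeasurableSet A)
    (ha : ∀ ω ∈ A, a ≤ g ω) (hb : ∀ ω ∈ Aᶜ, b ≤ g ω) :
    a * μ.real A + b * μ.real Aᶜ ≤ ∫ ω, g ω ∂μ := by
  have hA' := setIntegral_mono_on (integrableOn_const (C := a)) hg.integrableOn hA ha
  have hb' := setIntegral_mono_on (integrableOn_const (C := b)) hg.integrableOn hA.compl hb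
  rw [setIntegral_const, smul_eq_mul] at hA' hb'
  linarith [integral_add_compl hA hg]

end Integral

section DistributionFunction

variable {Ω V : Type*} [MeasurableSpace Ω] {P : Measure Ω}
  {ξ : ℕ → Ω → V} {f : ℝ → V → ℝ}

/-- The distribution function `F_t^{(x)}(r)`. -/
noncomputable def iterCDF (P : Measure Ω) (ξ : ℕ → Ω → V) (f : ℝ → V → ℝ) (x : ℝ) (t : ℕ)
    (r : ℝ) : ℝ :=
  P.real {ω | randomIterate f x (ξ · ω) t ≤ r}

/-- The constant `ε = min(ε₁, ε₂)` of the splitting condition. -/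
noncomputable def splittingConst (P : Measure Ω) (ξ : ℕ → Ω → V) (f : ℝ → V → ℝ) (c : ℝ)
    (N : ℕ) : ℝ :=
  min (P.real {ω | randomIterate f 1 (ξ · ω) N ≤ c}) (P.real {ω | c ≤ randomIterate f 0 (ξ · ω) N})

lemma iterCDF_nonneg (x : ℝ) (t : ℕ) (r : ℝ) : 0 ≤ iterCDF P ξ f x t r := measureReal_nonneg

lemma iterCDF_le_one [IsProbabilityMeasure P] (x : ℝ) (t : ℕ) (r : ℝ) :
    iterCDF P ξ f x t r ≤ 1 := measureReal_le_one

lemma antitoneOn_iterCDF [IsFiniteMeasure P] {s : Set ℝ} (hf_range : ∀ x ∈ s, ∀ v, f x v ∈ s)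
    (hf_mono : ∀ v, MonotoneOn (f · v) s) (t : ℕ) (r : ℝ) :
    AntitoneOn (fun x ↦ iterCDF P ξ f x t r) s := fun _ ha _ hb hab ↦
  measureReal_mono fun _ hω ↦ (monotoneOn_randomIterate hf_range hf_mono _ t ha hb hab).trans hω

variable [MeasurableSpace V]

lemma IsIIDSeq.iterCDF_add [IsProbabilityMeasure P] (h : IsIIDSeq ξ P)
    (hf : Measurable (Function.uncurry f)) (x : ℝ) (m n : ℕ) (r : ℝ) :
    iterCDF P ξ f x (m + n) r = ∫ ω, iterCDF P ξ f (randomIterate f x (ξ · ω) m) n r ∂P := by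
  have hG := measurable_measure_randomIterate_mem (P := P) h.measurable hf
    (measurableSet_Iic (a := r)) n
  have hY := measurable_randomIterate_comp h.measurable hf x m
  calc iterCDF P ξ f x (m + n) r
      = (∫⁻ ω, P {ω' | randomIterate f (randomIterate f x (ξ · ω) m) (ξ · ω') n ∈ Iic r} ∂P
          ).toReal :=
        congrArg ENNReal.toReal (h.measure_randomIterate_add_mem hf measurableSet_Iic x m n)
    _ = _ :=
        (integral_toReal (hG.comp hY).aemeasurable (ae_of_all _ fun _ ↦ measure_lt_top _ _)).symm

lemma integrable_iterCDF_comp [IsProbabilityMeasure P] (hξ : ∀ t, Measurable (ξ t))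
    (hf : Measurable (Function.uncurry f)) {Y : Ω → ℝ} (hY : Measurable Y) (n : ℕ) (r : ℝ) :
    Integrable (fun ω ↦ iterCDF P ξ f (Y ω) n r) P := by
  have hG := measurable_measure_randomIterate_mem (P := P) hξ hf (measurableSet_Iic (a := r)) n
  refine .of_bound (hG.ennreal_toReal.comp hY).aestronglyMeasurable 1 (ae_of_all _ fun _ ↦ ?_)
  rw [Real.norm_of_nonneg (iterCDF_nonneg _ _ _)]
  exact iterCDF_le_one _ _ _

lemma IsIIDSeq.iterCDF_sub_iterCDF_add_le [IsProbabilityMeasure P] (h : IsIIDSeq ξ P)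
    (hf_meas : Measurable (Function.uncurry f))
    (hf_range : ∀ x ∈ Icc (0 : ℝ) 1, ∀ v, f x v ∈ Icc (0 : ℝ) 1)
    (hf_mono : ∀ v, MonotoneOn (f · v) (Icc 0 1)) {c : ℝ} (hc : c ∈ Icc (0 : ℝ) 1) (N n : ℕ)
    (r : ℝ) :
    iterCDF P ξ f 0 (N + n) r - iterCDF P ξ f 1 (N + n) r ≤
      (1 - splittingConst P ξ f c N) * (iterCDF P ξ f 0 n r - iterCDF P ξ f 1 n r) := by
  set G : ℝ → ℝ := fun y ↦ iterCDF P ξ f y n r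
  set Y : ℝ → Ω → ℝ := fun x ω ↦ randomIterate f x (ξ · ω) N
  have hG : AntitoneOn G (Icc 0 1) := antitoneOn_iterCDF hf_range hf_mono n r
  have h0 : (0 : ℝ) ∈ Icc (0 : ℝ) 1 := left_mem_Icc.2 zero_le_one
  have h1 : (1 : ℝ) ∈ Icc (0 : ℝ) 1 := right_mem_Icc.2 zero_le_one
  have hY (x : ℝ) (hx : x ∈ Icc (0 : ℝ) 1) (ω : Ω) : Y x ω ∈ Icc (0 : ℝ) 1 :=
    randomIterate_mem hf_range hx _ N
  have hYmeas (x : ℝ) : Measurable (Y x) := measurable_randomIterate_comp h.measurable hf_meas x N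
  have hA₀ : MeasurableSet {ω | c ≤ Y 0 ω} := measurableSet_le measurable_const (hYmeas 0)
  have hA₁ : MeasurableSet {ω | Y 1 ω ≤ c} := measurableSet_le (hYmeas 1) measurable_const
  have hup : ∫ ω, G (Y 0 ω) ∂P ≤
      G c * P.real {ω | c ≤ Y 0 ω} + G 0 * P.real {ω | c ≤ Y 0 ω}ᶜ :=
    integral_le_mul_add_mul_compl (integrable_iterCDF_comp h.measurable hf_meas (hYmeas 0) n r) hA₀
      (fun ω hω ↦ hG hc (hY 0 h0 ω) hω) (fun ω _ ↦ hG h0 (hY 0 h0 ω) (hY 0 h0 ω).1)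
  have hlo : G c * P.real {ω | Y 1 ω ≤ c} + G 1 * P.real {ω | Y 1 ω ≤ c}ᶜ ≤
      ∫ ω, G (Y 1 ω) ∂P :=
    mul_add_mul_compl_le_integral (integrable_iterCDF_comp h.measurable hf_meas (hYmeas 1) n r) hA₁
      (fun ω hω ↦ hG (hY 1 h1 ω) hc hω) (fun ω _ ↦ hG (hY 1 h1 ω) h1 (hY 1 h1 ω).2)
  have hε₀ : splittingConst P ξ f c N ≤ P.real {ω | c ≤ Y 0 ω} := min_le_right _ _
  have hε₁ : splittingConst P ξ f c N ≤ P.real {ω | Y 1 ω ≤ c} := min_le_left _ _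
  have hc0 : G c ≤ G 0 := hG h0 hc hc.1
  have h1c : G 1 ≤ G c := hG hc h1 hc.2
  rw [probReal_compl_eq_one_sub hA₀] at hup
  rw [probReal_compl_eq_one_sub hA₁] at hlo
  rw [h.iterCDF_add hf_meas, h.iterCDF_add hf_meas]
  -- the gap `G 0 - G 1` drops by `P A₀ * (G 0 - G c) + P A₁ * (G c - G 1) ≥ ε * (G 0 - G 1)`
  linarith [mul_le_mul_of_nonneg_right hε₀ (sub_nonneg.2 hc0),
    mul_le_mul_of_nonneg_right hε₁ (sub_nonneg.2 h1c)]

lemma IsIIDSeq.iterCDF_sub_iterCDF_mul_le_pow [IsProbabilityMeasure P] (h : IsIIDSeq ξ P)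
    (hf_meas : Measurable (Function.uncurry f))
    (hf_range : ∀ x ∈ Icc (0 : ℝ) 1, ∀ v, f x v ∈ Icc (0 : ℝ) 1)
    (hf_mono : ∀ v, MonotoneOn (f · v) (Icc 0 1)) {c : ℝ} (hc : c ∈ Icc (0 : ℝ) 1) (N : ℕ) :
    ∀ k r, iterCDF P ξ f 0 (k * N) r - iterCDF P ξ f 1 (k * N) r ≤
      (1 - splittingConst P ξ f c N) ^ k
  | 0, r => by
    rw [zero_mul, pow_zero]
    linarith [iterCDF_le_one (P := P) (ξ := ξ) (f := f) 0 0 r,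
      iterCDF_nonneg (P := P) (ξ := ξ) (f := f) 1 0 r]
  | k + 1, r => by
    have hε : splittingConst P ξ f c N ≤ 1 := (min_le_left _ _).trans measureReal_le_one
    calc iterCDF P ξ f 0 ((k + 1) * N) r - iterCDF P ξ f 1 ((k + 1) * N) r
        ≤ (1 - splittingConst P ξ f c N) *
            (iterCDF P ξ f 0 (k * N) r - iterCDF P ξ f 1 (k * N) r) := by
          rw [add_one_mul, add_comm]
          exact h.iterCDF_sub_iterCDF_add_le hf_meas hf_range hf_mono hc N (k * N) r
      _ ≤ (1 - splittingConst P ξ f c N) * (1 - splittingConst P ξ f c N) ^ k :=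
          mul_le_mul_of_nonneg_left
            (h.iterCDF_sub_iterCDF_mul_le_pow hf_meas hf_range hf_mono hc N k r) (by linarith)
      _ = (1 - splittingConst P ξ f c N) ^ (k + 1) := (pow_succ' _ _).symm

end DistributionFunction

theorem stmt3_general
    {Ω : Type*} [MeasurableSpace Ω] {V : Type*} [MeasurableSpace V]
    (Pr : Measure Ω) [IsProbabilityMeasure Pr]
    (ξ : ℕ → Ω → V) (hξ_meas : ∀ t, Measurable (ξ t))
    (hξ_indep : iIndepFun ξ Pr)
    (hξ_ident : ∀ t, Measure.map (ξ t) Pr = Measure.map (ξ 0) Pr)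
    (f : ℝ → V → ℝ) (hf_meas : Measurable (Function.uncurry f))
    (hf_range : ∀ x ∈ Icc (0:ℝ) 1, ∀ v : V, f x v ∈ Icc (0:ℝ) 1)
    (hf_mono : ∀ v : V, ∀ x₁ ∈ Icc (0:ℝ) 1, ∀ x₂ ∈ Icc (0:ℝ) 1, x₁ ≤ x₂ → f x₁ v ≤ f x₂ v)
    (X : ℝ → ℕ → Ω → ℝ)
    (hX0 : ∀ x ω, X x 0 ω = x)
    (hXrec : ∀ x t ω, X x (t + 1) ω = f (X x t ω) (ξ t ω))
    -- splitting condition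
    (c : ℝ) (hc : c ∈ Icc (0:ℝ) 1) (N : ℕ) :
    ∀ k : ℕ, 1 ≤ k → ∀ r : ℝ,
      0 ≤ (Pr {ω | X 0 (k * N) ω ≤ r}).toReal - (Pr {ω | X 1 (k * N) ω ≤ r}).toReal ∧
      (Pr {ω | X 0 (k * N) ω ≤ r}).toReal - (Pr {ω | X 1 (k * N) ω ≤ r}).toReal ≤
        (1 - min (Pr {ω | X 1 N ω ≤ c}).toReal (Pr {ω | c ≤ X 0 N ω}).toReal) ^ k := by
  obtain rfl : X = fun x t ω ↦ randomIterate f x (ξ · ω) t := by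
    funext x t ω
    induction t with
    | zero => exact hX0 x ω
    | succ t ih => rw [hXrec, ih]; rfl
  have hξ : IsIIDSeq ξ Pr := ⟨hξ_meas, hξ_indep, hξ_ident⟩
  intro k _ r
  exact ⟨sub_nonneg.2 (antitoneOn_iterCDF hf_range hf_mono _ r (left_mem_Icc.2 zero_le_one)
      (right_mem_Icc.2 zero_le_one) zero_le_one),
    hξ.iterCDF_sub_iterCDF_mul_le_pow hf_meas hf_range hf_mono hc N k r⟩

/-- **geometric bound in the proof of Theorem 1.**
Under the splitting condition with constants `c`, `N`, `ε = min(ε₁,ε₂)`, for every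
integer `k ≥ 1` and every `r ∈ ℝ`, `0 ≤ F_{kN}^{(0)}(r) − F_{kN}^{(1)}(r) ≤ (1 − ε)^k`. -/
theorem stmt3
    {Ω : Type*} [MeasurableSpace Ω] {V : Type*} [MeasurableSpace V]
    (Pr : Measure Ω) [IsProbabilityMeasure Pr]
    (ξ : ℕ → Ω → V) (hξ_meas : ∀ t, Measurable (ξ t))
    (hξ_indep : iIndepFun ξ Pr)
    (hξ_ident : ∀ t, Measure.map (ξ t) Pr = Measure.map (ξ 0) Pr)
    (f : ℝ → V → ℝ) (hf_meas : Measurable (Function.uncurry f))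
    (hf_range : ∀ x ∈ Icc (0:ℝ) 1, ∀ v : V, f x v ∈ Icc (0:ℝ) 1)
    (hf_mono : ∀ v : V, ∀ x₁ ∈ Icc (0:ℝ) 1, ∀ x₂ ∈ Icc (0:ℝ) 1, x₁ ≤ x₂ → f x₁ v ≤ f x₂ v)
    (X : ℝ → ℕ → Ω → ℝ)
    (hX0 : ∀ x ω, X x 0 ω = x)
    (hXrec : ∀ x t ω, X x (t + 1) ω = f (X x t ω) (ξ t ω))
    -- splitting condition
    (c : ℝ) (hc : c ∈ Icc (0:ℝ) 1) (N : ℕ) (hN : 1 ≤ N)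
    (hsplit1 : 0 < Pr {ω | X 1 N ω ≤ c})
    (hsplit2 : 0 < Pr {ω | c ≤ X 0 N ω}) :
    ∀ k : ℕ, 1 ≤ k → ∀ r : ℝ,
      0 ≤ (Pr {ω | X 0 (k * N) ω ≤ r}).toReal - (Pr {ω | X 1 (k * N) ω ≤ r}).toReal ∧
      (Pr {ω | X 0 (k * N) ω ≤ r}).toReal - (Pr {ω | X 1 (k * N) ω ≤ r}).toReal ≤
        (1 - min (Pr {ω | X 1 N ω ≤ c}).toReal (Pr {ω | c ≤ X 0 N ω}).toReal) ^ k :=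
  stmt3_general Pr ξ hξ_meas hξ_indep hξ_ident f hf_meas hf_range hf_mono X hX0 hXrec c hc N
end

section
/- Let {ξ_t} and {ξ'_t} be two independent i.i.d. copies of the driving sequence, and let X_t^{(x)} be driven by {ξ_t} and Y_t^{(x)} by {ξ'_t}. (a) If the splitting condition holds with c, N, ε₁, ε₂, then P(X_N^{(1)} ≤ Y_N^{(0)}) ≥ ε₁·ε₂, and consequently, for any 0 ≤ x₀ < y₀ ≤ 1, P(X_N^{(y₀)} ≤ Y_N^{(x₀)}) ≥ ε₁·ε₂. (b) Conversely, if P(X_N^{(1)} ≤ Y_N^{(0)}) ≥ δ for some δ > 0 and integer N ≥ 1, then there exists c ∈ [0,1] such that P(X_N^{(1)} ≤ c) > 0 and P(X_N^{(0)} ≥ c) > 0. -/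
open MeasureTheory ProbabilityTheory Set Filter Topology

/-
(a) `X_N^{(1)}` and `Y_N^{(0)}` are independent, being driven by disjoint blocks of the noise,
and `Y_N^{(0)}` has the law of `X_N^{(0)}`: the law of an orbit is determined step by step, since
the current state is independent of the next noise variable, so the law of the pair is the
product of the marginals. Hence `P(X_N^{(1)} ≤ c ≤ Y_N^{(0)}) = ε₁ ε₂`, and monotonicity of `f`
gives `X_N^{(y₀)} ≤ X_N^{(1)}` and `Y_N^{(0)} ≤ Y_N^{(x₀)}`.

(b) Let `m` be the essential infimum of `X_N^{(1)}`, so that `P(X_N^{(1)} ≤ c) > 0` for `c > m`.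
If no level `c` split the two variables, then `Y_N^{(0)} ≤ m ≤ X_N^{(1)}` almost surely, so
`X_N^{(1)} ≤ Y_N^{(0)}` would force both to equal `m`, which the level `c = m` rules out.
-/

structure IsRandomOrbit {Ω V α : Type*} (f : α → V → α) (ξ : ℕ → Ω → V) (x : α)
    (Z : ℕ → Ω → α) : Prop where
  zero : ∀ ω, Z 0 ω = x
  succ : ∀ t ω, Z (t + 1) ω = f (Z t ω) (ξ t ω)

lemma measurable_iSup_comap {Ω ι V : Type*} [mV : MeasurableSpace V] (ζ : ι → Ω → V)
    {S : Set ι} {i : ι} (hi : i ∈ S) : Measurable[⨆ j ∈ S, mV.comap (ζ j)] (ζ i) :=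
  (comap_measurable (ζ i)).mono (le_iSup₂ (f := fun j (_ : j ∈ S) => mV.comap (ζ j)) i hi) le_rfl

lemma ProbabilityTheory.iIndepFun.indepFun_of_measurable_iSup {Ω ι V β γ : Type*}
    [MeasurableSpace Ω] [mV : MeasurableSpace V] [MeasurableSpace β] [MeasurableSpace γ]
    {μ : Measure Ω}
    {ζ : ι → Ω → V} (hζ : ∀ i, Measurable (ζ i)) (h : iIndepFun ζ μ) {S T : Set ι}
    (hST : Disjoint S T) {A : Ω → β} {B : Ω → γ}
    (hA : Measurable[⨆ i ∈ S, mV.comap (ζ i)] A) (hB : Measurable[⨆ i ∈ T, mV.comap (ζ i)] B) :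
    IndepFun A B μ :=
  (IndepFun_iff_Indep A B μ).2 <| indep_of_indep_of_le
    (indep_iSup_of_disjoint (fun i => (hζ i).comap_le) h.iIndep hST) hA.comap_le hB.comap_le

namespace IsRandomOrbit

variable {Ω V α : Type*} {f : α → V → α} {ξ ξ' : ℕ → Ω → V} {x y : α} {Z Z' : ℕ → Ω → α}

lemma mem {s : Set α} (hf : ∀ x ∈ s, ∀ v, f x v ∈ s) (hZ : IsRandomOrbit f ξ x Z) (hx : x ∈ s) :
    ∀ t ω, Z t ω ∈ s
  | 0, ω => (hZ.zero ω).symm ▸ hx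
  | t + 1, ω => (hZ.succ t ω).symm ▸ hf _ (hZ.mem hf hx t ω) _

lemma le [Preorder α] {s : Set α} (hf : ∀ x ∈ s, ∀ v, f x v ∈ s)
    (hf_mono : ∀ v, ∀ x₁ ∈ s, ∀ x₂ ∈ s, x₁ ≤ x₂ → f x₁ v ≤ f x₂ v)
    (hZ : IsRandomOrbit f ξ x Z) (hZ' : IsRandomOrbit f ξ y Z') (hx : x ∈ s) (hy : y ∈ s)
    (hxy : x ≤ y) : ∀ t ω, Z t ω ≤ Z' t ω
  | 0, ω => by rw [hZ.zero, hZ'.zero]; exact hxy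
  | t + 1, ω => by
    rw [hZ.succ, hZ'.succ]
    exact hf_mono _ _ (hZ.mem hf hx t ω) _ (hZ'.mem hf hy t ω) (hZ.le hf hf_mono hZ' hx hy hxy t ω)

variable [MeasurableSpace V] [MeasurableSpace α]

lemma measurable_of_forall_lt {m : MeasurableSpace Ω} (hf : Measurable (Function.uncurry f))
    (hZ : IsRandomOrbit f ξ x Z) {t : ℕ} (hξ : ∀ s < t, Measurable[m] (ξ s)) :
    Measurable[m] (Z t) := by
  induction t with
  | zero => rw [funext hZ.zero]; exact measurable_const
  | succ t ih =>
    rw [funext (hZ.succ t)]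
    exact hf.comp ((ih fun s hs => hξ s (by omega)).prodMk (hξ t t.lt_succ_self))

variable [MeasurableSpace Ω] {μ : Measure Ω}

lemma indepFun (hf : Measurable (Function.uncurry f)) (hZ : IsRandomOrbit f ξ x Z)
    (hξ : ∀ t, Measurable (ξ t)) (hξ_indep : iIndepFun ξ μ) (t : ℕ) : IndepFun (Z t) (ξ t) μ :=
  hξ_indep.indepFun_of_measurable_iSup hξ (S := Iio t) (T := {t}) (by simp)
    (hZ.measurable_of_forall_lt hf fun s hs => measurable_iSup_comap ξ hs)
    (measurable_iSup_comap ξ rfl)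

lemma identDistrib [IsFiniteMeasure μ] (hf : Measurable (Function.uncurry f))
    (hZ : IsRandomOrbit f ξ x Z) (hZ' : IsRandomOrbit f ξ' x Z')
    (hξ : ∀ t, Measurable (ξ t)) (hξ' : ∀ t, Measurable (ξ' t))
    (hξ_indep : iIndepFun ξ μ) (hξ'_indep : iIndepFun ξ' μ)
    (hξξ' : ∀ t, IdentDistrib (ξ t) (ξ' t) μ μ) (t : ℕ) : IdentDistrib (Z t) (Z' t) μ μ := by
  induction t with
  | zero => rw [funext hZ.zero, funext hZ'.zero]; exact .refl aemeasurable_const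
  | succ t ih =>
    have hpair : IdentDistrib (fun ω => (Z t ω, ξ t ω)) (fun ω => (Z' t ω, ξ' t ω)) μ μ := by
      refine ⟨ih.aemeasurable_fst.prodMk (hξ t).aemeasurable,
        ih.aemeasurable_snd.prodMk (hξ' t).aemeasurable, ?_⟩
      rw [(hZ.indepFun hf hξ hξ_indep t).map_prod_eq_prod_map_map ih.aemeasurable_fst
          (hξ t).aemeasurable,
        (hZ'.indepFun hf hξ' hξ'_indep t).map_prod_eq_prod_map_map ih.aemeasurable_snd
          (hξ' t).aemeasurable, ih.map_eq, (hξξ' t).map_eq]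
    rw [funext (hZ.succ t), funext (hZ'.succ t)]
    exact hpair.comp hf

end IsRandomOrbit

lemma ProbabilityTheory.IndepFun.measure_le_mul_measure_ge_le {Ω β : Type*} [MeasurableSpace Ω]
    {μ : Measure Ω} [Preorder β] [TopologicalSpace β] [OrderClosedTopology β] [MeasurableSpace β]
    [OpensMeasurableSpace β] {A B : Ω → β} (h : IndepFun A B μ) (c : β) :
    μ {ω | A ω ≤ c} * μ {ω | c ≤ B ω} ≤ μ {ω | A ω ≤ B ω} := by
  change μ (A ⁻¹' Iic c) * μ (B ⁻¹' Ici c) ≤ _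
  rw [← h.measure_inter_preimage_eq_mul _ _ measurableSet_Iic measurableSet_Ici]
  exact measure_mono fun ω hω => le_trans hω.1 hω.2

lemma exists_measure_le_ne_zero_and_measure_ge_ne_zero {Ω : Type*} [MeasurableSpace Ω]
    {μ : Measure Ω} {A B : Ω → ℝ} (hA_ge : IsBoundedUnder (· ≥ ·) (ae μ) A)
    (hA_le : IsBoundedUnder (· ≤ ·) (ae μ) A) (h : μ {ω | A ω ≤ B ω} ≠ 0) :
    ∃ c, μ {ω | A ω ≤ c} ≠ 0 ∧ μ {ω | c ≤ B ω} ≠ 0 := by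
  have : (ae μ).NeBot := ae_neBot.2 fun hμ => h (by simp [hμ])
  set m := essInf A μ
  by_contra! hAB
  have hA_pos : ∀ c, m < c → μ {ω | A ω ≤ c} ≠ 0 := fun c hc hAc =>
    hc.not_ge <| le_essInf_of_ae_le c (measure_eq_zero_iff_ae_notMem.1 hAc |>.mono
      fun ω hω => (not_le.1 hω).le) hA_le.isCoboundedUnder_ge
  have h_lt : μ {ω | A ω < m} = 0 := meas_lt_essInf hA_ge
  have h_gt : μ {ω | m < B ω} = 0 := by
    refine measure_mono_null (t := ⋃ q : ℚ, {ω | m < q ∧ (q : ℝ) ≤ B ω}) (fun ω hω => ?_)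
      (measure_iUnion_null fun q => ?_)
    · obtain ⟨q, hmq, hqB⟩ := exists_rat_btwn (show m < B ω from hω)
      exact mem_iUnion.2 ⟨q, hmq, hqB.le⟩
    · by_cases hq : m < q
      · exact measure_mono_null (fun ω hω => hω.2) (hAB q (hA_pos q hq))
      · simp [hq]
  have h_eq : μ ({ω | A ω ≤ m} ∩ {ω | m ≤ B ω}) = 0 := by
    by_cases hm : μ {ω | A ω ≤ m} = 0
    · exact measure_mono_null inter_subset_left hm
    · exact measure_mono_null inter_subset_right (hAB m hm)
  refine h (measure_mono_null (fun ω hω => ?_)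
    (measure_union_null (measure_union_null h_lt h_gt) h_eq))
  by_cases h1 : A ω < m
  · exact .inl (.inl h1)
  by_cases h2 : m < B ω
  · exact .inl (.inr h2)
  exact .inr ⟨hω.trans (not_lt.1 h2), (not_lt.1 h1).trans hω⟩

/-- **splitting condition vs. strong reversing condition.**
Let `{ξ_t}` and `{ξ'_t}` be two independent i.i.d. copies of the driving sequence
(encoded as a single mutually independent, identically distributed family `ζ` indexed by
`ℕ ⊕ ℕ`), let `X_t^{(x)}` be driven by `{ξ_t} = ζ ∘ inl` and `Y_t^{(x)}` by
`{ξ'_t} = ζ ∘ inr`.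
(a) If the splitting condition holds with `c, N, ε₁, ε₂`, then
`P(X_N^{(1)} ≤ Y_N^{(0)}) ≥ ε₁·ε₂`, and consequently for any `0 ≤ x₀ < y₀ ≤ 1`,
`P(X_N^{(y₀)} ≤ Y_N^{(x₀)}) ≥ ε₁·ε₂`.
(b) Conversely, if `P(X_N^{(1)} ≤ Y_N^{(0)}) ≥ δ > 0` for some `N ≥ 1`, then there is a
`c ∈ [0,1]` with `P(X_N^{(1)} ≤ c) > 0` and `P(X_N^{(0)} ≥ c) > 0`. -/
theorem stmt4
    {Ω : Type*} [MeasurableSpace Ω] {V : Type*} [MeasurableSpace V]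
    (Pr : Measure Ω) [IsProbabilityMeasure Pr]
    (ζ : ℕ ⊕ ℕ → Ω → V) (hζ_meas : ∀ i, Measurable (ζ i))
    (hζ_indep : iIndepFun ζ Pr)
    (hζ_ident : ∀ i : ℕ ⊕ ℕ, Measure.map (ζ i) Pr = Measure.map (ζ (Sum.inl 0)) Pr)
    (f : ℝ → V → ℝ) (hf_meas : Measurable (Function.uncurry f))
    (hf_range : ∀ x ∈ Icc (0:ℝ) 1, ∀ v : V, f x v ∈ Icc (0:ℝ) 1)
    (hf_mono : ∀ v : V, ∀ x₁ ∈ Icc (0:ℝ) 1, ∀ x₂ ∈ Icc (0:ℝ) 1, x₁ ≤ x₂ → f x₁ v ≤ f x₂ v)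
    (X Y : ℝ → ℕ → Ω → ℝ)
    (hX0 : ∀ x ω, X x 0 ω = x)
    (hXrec : ∀ x t ω, X x (t + 1) ω = f (X x t ω) (ζ (Sum.inl t) ω))
    (hY0 : ∀ x ω, Y x 0 ω = x)
    (hYrec : ∀ x t ω, Y x (t + 1) ω = f (Y x t ω) (ζ (Sum.inr t) ω)) :
    -- (a)
    ((∀ c ∈ Icc (0:ℝ) 1, ∀ N : ℕ, 1 ≤ N →
        0 < Pr {ω | X 1 N ω ≤ c} → 0 < Pr {ω | c ≤ X 0 N ω} →
        Pr {ω | X 1 N ω ≤ c} * Pr {ω | c ≤ X 0 N ω} ≤ Pr {ω | X 1 N ω ≤ Y 0 N ω} ∧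
        ∀ x₀ y₀ : ℝ, 0 ≤ x₀ → x₀ < y₀ → y₀ ≤ 1 →
          Pr {ω | X 1 N ω ≤ c} * Pr {ω | c ≤ X 0 N ω} ≤ Pr {ω | X y₀ N ω ≤ Y x₀ N ω}) ∧
    -- (b)
     (∀ N : ℕ, 1 ≤ N → ∀ δ : ENNReal, 0 < δ → δ ≤ Pr {ω | X 1 N ω ≤ Y 0 N ω} →
        ∃ c ∈ Icc (0:ℝ) 1, 0 < Pr {ω | X 1 N ω ≤ c} ∧ 0 < Pr {ω | c ≤ X 0 N ω})) := by
  have hX : ∀ x, IsRandomOrbit f (fun t => ζ (.inl t)) x (X x) := fun x => ⟨hX0 x, hXrec x⟩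
  have hY : ∀ x, IsRandomOrbit f (fun t => ζ (.inr t)) x (Y x) := fun x => ⟨hY0 x, hYrec x⟩
  have hXY_indep (N : ℕ) : IndepFun (X 1 N) (Y 0 N) Pr :=
    hζ_indep.indepFun_of_measurable_iSup hζ_meas isCompl_range_inl_range_inr.disjoint
      ((hX 1).measurable_of_forall_lt hf_meas fun t _ => measurable_iSup_comap ζ ⟨t, rfl⟩)
      ((hY 0).measurable_of_forall_lt hf_meas fun t _ => measurable_iSup_comap ζ ⟨t, rfl⟩)
  have hXY_ident (N : ℕ) : IdentDistrib (X 0 N) (Y 0 N) Pr Pr :=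
    (hX 0).identDistrib hf_meas (hY 0) (fun _ => hζ_meas _) (fun _ => hζ_meas _)
      (hζ_indep.precomp Sum.inl_injective) (hζ_indep.precomp Sum.inr_injective)
      (fun _ => ⟨(hζ_meas _).aemeasurable, (hζ_meas _).aemeasurable,
        (hζ_ident _).trans (hζ_ident _).symm⟩) N
  have hX1_mem := (hX 1).mem hf_range unitInterval.one_mem
  have hY0_mem := (hY 0).mem hf_range unitInterval.zero_mem
  refine ⟨fun c _ N _ _ _ => ?_, fun N _ δ hδ hδ_le => ?_⟩
  · have key : Pr {ω | X 1 N ω ≤ c} * Pr {ω | c ≤ X 0 N ω} ≤ Pr {ω | X 1 N ω ≤ Y 0 N ω} :=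
      (hXY_ident N).measure_mem_eq measurableSet_Ici ▸ (hXY_indep N).measure_le_mul_measure_ge_le c
    refine ⟨key, fun x₀ y₀ hx₀ hxy hy₀ => key.trans (measure_mono fun ω hω => ?_)⟩
    have hx₀_mem : x₀ ∈ Icc (0:ℝ) 1 := ⟨hx₀, hxy.le.trans hy₀⟩
    have hy₀_mem : y₀ ∈ Icc (0:ℝ) 1 := ⟨hx₀.trans hxy.le, hy₀⟩
    calc X y₀ N ω
        ≤ X 1 N ω := (hX y₀).le hf_range hf_mono (hX 1) hy₀_mem unitInterval.one_mem hy₀ N ω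
      _ ≤ Y 0 N ω := hω
      _ ≤ Y x₀ N ω := (hY 0).le hf_range hf_mono (hY x₀) unitInterval.zero_mem hx₀_mem hx₀ N ω
  · obtain ⟨c, hXc, hcY⟩ := exists_measure_le_ne_zero_and_measure_ge_ne_zero
      (isBoundedUnder_of_eventually_ge (a := 0) (.of_forall fun ω => (hX1_mem N ω).1))
      (isBoundedUnder_of_eventually_le (a := 1) (.of_forall fun ω => (hX1_mem N ω).2))
      (hδ.trans_le hδ_le).ne'
    obtain ⟨ω, hω⟩ := nonempty_of_measure_ne_zero hXc
    obtain ⟨ω', hω'⟩ := nonempty_of_measure_ne_zero hcY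
    refine ⟨c, ⟨(hX1_mem N ω).1.trans hω, hω'.trans (hY0_mem N ω').2⟩, pos_iff_ne_zero.2 hXc,
      pos_iff_ne_zero.2 (((hXY_ident N).measure_mem_eq measurableSet_Ici).trans_ne hcY)⟩
end

section
/- For every asset level a > a̲, there exists at least one endowment state e ∈ E such that f(a,e) < a. -/
open MeasureTheory Set Filter Topology Real

/-- **Lemma 1(i), Huggett model.**  In the Bewley–Imrohoroglu–Huggett–Aiyagari
precautionary savings model, for every asset level `a > a̲` there is at least one endowment
state `e ∈ E` such that `f(a,e) < a`. -/
theorem stmt9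
    {E : Type*} [Fintype E] [Nonempty E]
    (en : E → ℝ) (hen_pos : ∀ e, 0 < en e)
    (p : E → E → ℝ) (hp_pos : ∀ e e', 0 < p e e') (hp_sum : ∀ e, ∑ e', p e e' = 1)
    (β R : ℝ) (hβ : β ∈ Ioo (0:ℝ) 1) (hR : 0 < R) (hβR : β * R < 1)
    (abot : ℝ) (habot : abot < 0)
    (γ : ℝ) (hγ : 1 < γ)
    -- the value functions and their derivatives
    (v va : ℝ → E → ℝ)
    (hv_concave : ∀ e, StrictConcaveOn ℝ (Ici abot) (fun a => v a e))
    (hv_deriv : ∀ e, ∀ a ∈ Ici abot, HasDerivWithinAt (fun a => v a e) (va a e) (Ici abot) a)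
    (hva_pos : ∀ e, ∀ a ∈ Ici abot, 0 < va a e)
    -- the policy functions
    (cpol fpol : ℝ → E → ℝ)
    (hc_pos : ∀ e, ∀ a ∈ Ici abot, 0 < cpol a e)
    (hf_ge : ∀ e, ∀ a ∈ Ici abot, abot ≤ fpol a e)
    (hbudget : ∀ e, ∀ a ∈ Ici abot, cpol a e + R⁻¹ * fpol a e = a + en e)
    (henv : ∀ e, ∀ a ∈ Ici abot, va a e = cpol a e ^ (-γ))
    (heuler : ∀ e, ∀ a ∈ Ici abot,
        β * R * ∑ e', p e e' * va (fpol a e) e' ≤ cpol a e ^ (-γ))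
    (heuler_eq : ∀ e, ∀ a ∈ Ici abot, abot < fpol a e →
        cpol a e ^ (-γ) = β * R * ∑ e', p e e' * va (fpol a e) e') :
    ∀ a : ℝ, abot < a → ∃ e : E, fpol a e < a := by
  
  intro a ha
  by_contra hcon
  push_neg at hcon
  have haI : a ∈ Ici abot := le_of_lt ha
  -- va is antitone in a
  have hanti : ∀ e, ∀ x ∈ Ici abot, ∀ y ∈ Ici abot, x ≤ y → va y e ≤ va x e := by
    intro e x hx y hy hxy
    rcases eq_or_lt_of_le hxy with rfl | hlt
    · exact le_refl _
    · have hc := (hv_concave e).concaveOn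
      calc va y e ≤ slope (fun a => v a e) x y :=
            hc.le_slope_of_hasDerivWithinAt hx hy hlt (hv_deriv e y hy)
        _ ≤ va x e := hc.slope_le_of_hasDerivWithinAt hx hy hlt (hv_deriv e x hx)
  -- key inequality for each e
  have hkey : ∀ e, va a e < ∑ e', p e e' * va a e' := by
    intro e
    have hfI : fpol a e ∈ Ici abot := hf_ge e a haI
    have hfa : abot < fpol a e := lt_of_lt_of_le ha (hcon e)
    have heq := heuler_eq e a haI hfa
    have hsum_le : ∑ e', p e e' * va (fpol a e) e' ≤ ∑ e', p e e' * va a e' := by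
      apply Finset.sum_le_sum
      intro e' _
      exact mul_le_mul_of_nonneg_left
        (hanti e' a haI (fpol a e) hfI (hcon e)) (le_of_lt (hp_pos e e'))
    have hsum_pos : 0 < ∑ e', p e e' * va a e' := by
      apply Finset.sum_pos
      · intro e' _
        exact mul_pos (hp_pos e e') (hva_pos e' a haI)
      · exact Finset.univ_nonempty
    have hβR0 : 0 < β * R := mul_pos hβ.1 hR
    calc va a e = cpol a e ^ (-γ) := henv e a haI
      _ = β * R * ∑ e', p e e' * va (fpol a e) e' := heq
      _ ≤ β * R * ∑ e', p e e' * va a e' := by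
          exact mul_le_mul_of_nonneg_left hsum_le (le_of_lt hβR0)
      _ < 1 * ∑ e', p e e' * va a e' := by
          exact mul_lt_mul_of_pos_right hβR hsum_pos
      _ = ∑ e', p e e' * va a e' := one_mul _
  -- take e* maximizing va a ·
  obtain ⟨estar, -, hestar⟩ :=
    Finset.exists_max_image (Finset.univ : Finset E) (fun e => va a e) Finset.univ_nonempty
  have hub : ∑ e', p estar e' * va a e' ≤ va a estar := by
    calc ∑ e', p estar e' * va a e'
        ≤ ∑ e', p estar e' * va a estar := by
          apply Finset.sum_le_sum
          intro e' _
          exact mul_le_mul_of_nonneg_left (hestar e' (Finset.mem_univ e'))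
            (le_of_lt (hp_pos estar e'))
      _ = (∑ e', p estar e') * va a estar := by rw [Finset.sum_mul]
      _ = va a estar := by rw [hp_sum estar, one_mul]
  exact absurd (lt_of_lt_of_le (hkey estar) hub) (lt_irrefl _)
end

section
/- There exists â ≥ a̲ such that for all a > â and all e ∈ E, f(a,e) < a. -/
open MeasureTheory Set Filter Topology Real

/-- **Lemma 1(ii), Huggett model.**  In the Bewley–Imrohoroglu–Huggett–Aiyagari
precautionary savings model, there exists `â ≥ a̲` such that for all `a > â` and all
`e ∈ E`, `f(a,e) < a`. -/
theorem stmt10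
    {E : Type*} [Fintype E] [Nonempty E]
    (en : E → ℝ) (hen_pos : ∀ e, 0 < en e)
    (p : E → E → ℝ) (hp_pos : ∀ e e', 0 < p e e') (hp_sum : ∀ e, ∑ e', p e e' = 1)
    (β R : ℝ) (hβ : β ∈ Ioo (0:ℝ) 1) (hR : 0 < R) (hβR : β * R < 1)
    (abot : ℝ) (habot : abot < 0)
    (γ : ℝ) (hγ : 1 < γ)
    -- the value functions and their derivatives
    (v va : ℝ → E → ℝ)
    (hv_concave : ∀ e, StrictConcaveOn ℝ (Ici abot) (fun a => v a e))
    (hv_deriv : ∀ e, ∀ a ∈ Ici abot, HasDerivWithinAt (fun a => v a e) (va a e) (Ici abot) a)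
    (hva_pos : ∀ e, ∀ a ∈ Ici abot, 0 < va a e)
    -- the policy functions
    (cpol fpol : ℝ → E → ℝ)
    (hc_pos : ∀ e, ∀ a ∈ Ici abot, 0 < cpol a e)
    (hf_ge : ∀ e, ∀ a ∈ Ici abot, abot ≤ fpol a e)
    (hbudget : ∀ e, ∀ a ∈ Ici abot, cpol a e + R⁻¹ * fpol a e = a + en e)
    (henv : ∀ e, ∀ a ∈ Ici abot, va a e = cpol a e ^ (-γ))
    (heuler : ∀ e, ∀ a ∈ Ici abot,
        β * R * ∑ e', p e e' * va (fpol a e) e' ≤ cpol a e ^ (-γ))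
    (heuler_eq : ∀ e, ∀ a ∈ Ici abot, abot < fpol a e →
        cpol a e ^ (-γ) = β * R * ∑ e', p e e' * va (fpol a e) e')
    -- additional monotonicity and limit properties of the policy functions
    (hc_mono : ∀ e, StrictMonoOn (fun a => cpol a e) (Ici abot))
    (hf_mono : ∀ e, MonotoneOn (fun a => fpol a e) (Ici abot))
    (hc_lim : ∀ e, Tendsto (fun a => cpol a e) atTop atTop) :
    ∃ ahat : ℝ, abot ≤ ahat ∧ ∀ a : ℝ, ahat < a → ∀ e : E, fpol a e < a := by

  classical
  have hγ0 : (0:ℝ) < γ := by linarith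
  have hβR0 : (0:ℝ) < β * R := mul_pos hβ.1 hR
  set M : ℝ := Finset.univ.sup' Finset.univ_nonempty en with hMdef
  have hMe : ∀ e : E, en e ≤ M := fun e => Finset.le_sup' en (Finset.mem_univ e)
  set lam : ℝ := (β * R) ^ (-γ⁻¹ : ℝ) with hlamdef
  have hlam1 : 1 < lam := by
    rw [hlamdef, Real.one_lt_rpow_iff_of_pos hβR0]
    right
    exact ⟨hβR, by simp [inv_pos.2 hγ0]⟩
  set K : ℝ := M / (lam - 1) with hKdef
  have hlamK : (lam - 1) * K = M := by
    rw [hKdef, mul_comm, div_mul_cancel₀ M (by linarith : lam - 1 ≠ 0)]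
  have hev : ∀ᶠ a in atTop, abot < a ∧ ∀ e : E, K ≤ cpol a e := by
    refine (eventually_gt_atTop abot).and (eventually_all.2 fun e => ?_)
    exact (hc_lim e).eventually_ge_atTop K
  obtain ⟨N, hN⟩ := eventually_atTop.1 hev
  refine ⟨max N abot, le_max_right _ _, ?_⟩
  intro a ha e
  obtain ⟨haab, hKa⟩ := hN a (le_of_lt (lt_of_le_of_lt (le_max_left _ _) ha))
  have haI : a ∈ Ici abot := le_of_lt haab
  by_contra hcon
  push_neg at hcon
  -- the state with minimal consumption at `a`
  obtain ⟨e0, -, he0⟩ := Finset.exists_min_image Finset.univ (fun e' => cpol a e')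
    ⟨Classical.arbitrary E, Finset.mem_univ _⟩
  set x : ℝ := cpol a e0 with hxdef
  have hx0 : (0:ℝ) < x := hc_pos e0 a haI
  have hxmin : ∀ e' : E, x ≤ cpol a e' := fun e' => he0 e' (Finset.mem_univ _)
  have hxγ : (0:ℝ) < x ^ (-γ) := Real.rpow_pos_of_pos hx0 _
  -- key inequality from the Euler equation
  have key : ∀ e1 : E, a ≤ fpol a e1 → cpol a e1 ^ (-γ) ≤ β * R * x ^ (-γ) := by
    intro e1 h1
    have hfI : fpol a e1 ∈ Ici abot := le_trans haI h1
    have heq := heuler_eq e1 a haI (lt_of_lt_of_le haab h1)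
    rw [heq]
    refine mul_le_mul_of_nonneg_left ?_ (le_of_lt hβR0)
    have hsum : ∑ e', p e1 e' * va (fpol a e1) e' ≤ ∑ e', p e1 e' * x ^ (-γ) := by
      refine Finset.sum_le_sum fun e' _ => ?_
      refine mul_le_mul_of_nonneg_left ?_ (le_of_lt (hp_pos e1 e'))
      rw [henv e' (fpol a e1) hfI]
      have hce : x ≤ cpol (fpol a e1) e' :=
        le_trans (hxmin e') ((hc_mono e').monotoneOn haI hfI h1)
      exact Real.rpow_le_rpow_of_nonpos hx0 hce (by linarith)
    calc ∑ e', p e1 e' * va (fpol a e1) e' ≤ ∑ e', p e1 e' * x ^ (-γ) := hsum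
      _ = x ^ (-γ) := by rw [← Finset.sum_mul, hp_sum, one_mul]
  -- step 1: the minimal-consumption state dissaves
  have h0 : fpol a e0 < a := by
    by_contra h0
    push_neg at h0
    have hk := key e0 h0
    nlinarith
  -- step 2: lower bound on consumption at state e
  have hc1 : lam * x ≤ cpol a e := by
    have hk := key e hcon
    have hlamγ : (lam * x) ^ (-γ) = β * R * x ^ (-γ) := by
      rw [Real.mul_rpow (by positivity) (le_of_lt hx0), hlamdef,
        ← Real.rpow_mul (le_of_lt hβR0)]
      have : (-γ⁻¹) * (-γ) = 1 := by
        rw [neg_mul_neg, inv_mul_cancel₀ (ne_of_gt hγ0)]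
      rw [this, Real.rpow_one]
    rw [← hlamγ] at hk
    by_contra hlt
    push_neg at hlt
    have := Real.rpow_lt_rpow_of_neg (hc_pos e a haI) hlt (by linarith : -γ < 0)
    linarith
  -- budget identities and final contradiction
  have hb1 := hbudget e a haI
  have hb0 := hbudget e0 a haI
  have hra : R⁻¹ * a ≤ R⁻¹ * fpol a e :=
    mul_le_mul_of_nonneg_left hcon (le_of_lt (inv_pos.2 hR))
  have hra0 : R⁻¹ * fpol a e0 < R⁻¹ * a := (mul_lt_mul_iff_right₀ (inv_pos.2 hR)).2 h0
  have hKx : (lam - 1) * K ≤ (lam - 1) * x :=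
    mul_le_mul_of_nonneg_left (hKa e0) (by linarith)
  have hMe' := hMe e
  have hen0 := hen_pos e0
  nlinarith
end

section
/- For every k > k′, min_{z∈Ẑ} f(k,z) < k. -/
open MeasureTheory Set Filter Topology

/-- **Lemma 2, one-sector stochastic optimal growth model.**
With `k″ = min{k ≥ 0 : max_z f(k,z) ≤ k}` and `k′ = max{k ≤ k″ : min_z f(k,z) = k}`,
`0 ≤ k′ < k″`, one has `min_z f(k,z) < k` for every `k > k′`. -/
theorem stmt13
    {Zh : Type*} [Fintype Zh] (hne : (Finset.univ : Finset Zh).Nonempty)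
    (p : Zh → Zh → ℝ) (hp_pos : ∀ z z', 0 < p z z') (hp_sum : ∀ z, ∑ z', p z z' = 1)
    (β : ℝ) (hβ : β ∈ Ioo (0:ℝ) 1)
    -- the production function and its marginal product
    (φ φk : ℝ → Zh → ℝ)
    (hφ_mono : ∀ z, StrictMonoOn (fun k => φ k z) (Ici (0:ℝ)))
    (hφ_concave : ∀ z, StrictConcaveOn ℝ (Ici (0:ℝ)) (fun k => φ k z))
    (hφ_deriv : ∀ z, ∀ k : ℝ, 0 < k → HasDerivAt (fun k => φ k z) (φk k z) k)
    (hφk_pos : ∀ z, ∀ k : ℝ, 0 < k → 0 < φk k z)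
    (hφk_cont : ∀ z, ContinuousOn (fun k => φk k z) (Ioi (0:ℝ)))
    (hφk_anti : ∀ z, StrictAntiOn (fun k => φk k z) (Ioi (0:ℝ)))
    -- the policy function
    (f : ℝ → Zh → ℝ)
    (hf_nonneg : ∀ z, ∀ k : ℝ, 0 ≤ k → 0 ≤ f k z)
    (hf_cont : ∀ z, ContinuousOn (fun k => f k z) (Ici (0:ℝ)))
    (hf_mono : ∀ z, StrictMonoOn (fun k => f k z) (Ici (0:ℝ)))
    -- the value-function derivatives and the Euler identity
    (vk : ℝ → Zh → ℝ)
    (hvk_pos : ∀ z, ∀ k : ℝ, 0 < k → 0 < vk k z)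
    (hvk_anti : ∀ z, StrictAntiOn (fun k => vk k z) (Ioi (0:ℝ)))
    (heuler : ∀ z, ∀ k : ℝ, 0 < k →
        vk k z = β * φk k z * ∑ z', p z z' * vk (f k z) z')
    -- the maximal sustainable capital stock
    (kmax : ℝ) (hkmax : 0 < kmax)
    (hklarge : ∀ k : ℝ, kmax < k → ∀ z, f k z ≤ φ k z ∧ φ k z < k)
    -- k″ and k′
    (k' k'' : ℝ)
    (hk'' : IsLeast {k : ℝ | 0 ≤ k ∧ Finset.univ.sup' hne (fun z => f k z) ≤ k} k'')
    (hk' : IsGreatest {k : ℝ | k ≤ k'' ∧ Finset.univ.inf' hne (fun z => f k z) = k} k')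
    (hk'_nonneg : 0 ≤ k') (hk'_lt : k' < k'') :
    ∀ k : ℝ, k' < k → Finset.univ.inf' hne (fun z => f k z) < k := by
  intro k hk
  by_contra hcon
  push_neg at hcon
  have hk''0 : 0 < k'' := lt_of_le_of_lt hk'_nonneg hk'_lt
  have hkpos : 0 < k := lt_of_le_of_lt hk'_nonneg hk
  have hfk : ∀ z, k ≤ f k z := fun z =>
    le_trans hcon (Finset.inf'_le _ (Finset.mem_univ z))
  have hsup : ∀ z, f k'' z ≤ k'' := fun z =>
    le_trans (Finset.le_sup' (fun z => f k'' z) (Finset.mem_univ z)) hk''.1.2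
  rcases le_or_gt k k'' with hle | hgt
  · -- IVT case
    set g : ℝ → ℝ := fun x => Finset.univ.inf' hne (fun z => f x z) - x with hgdef
    have hgc : ContinuousOn g (Icc k k'') := by
      apply ContinuousOn.sub _ continuousOn_id
      exact ContinuousOn.finset_inf'_apply hne fun z _ =>
        (hf_cont z).mono (fun x hx => le_trans hkpos.le hx.1)
    have hgk : 0 ≤ g k := by simp only [hgdef]; linarith [hcon]
    have hgk'' : g k'' ≤ 0 := by
      simp only [hgdef]
      have := le_trans (Finset.inf'_le (fun z => f k'' z) (Finset.mem_univ hne.choose))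
        (hsup hne.choose)
      linarith
    have h0 : (0:ℝ) ∈ Icc (g k'') (g k) := ⟨hgk'', hgk⟩
    obtain ⟨k0, hk0mem, hk0⟩ := intermediate_value_Icc' hle hgc h0
    have hk0fix : Finset.univ.inf' hne (fun z => f k0 z) = k0 := by
      have : g k0 = 0 := hk0
      simp only [hgdef] at this; linarith
    have := hk'.2 ⟨hk0mem.2, hk0fix⟩
    linarith [hk0mem.1]
  · -- Euler / ratio case: k > k''
    obtain ⟨zs, _, hzs⟩ := Finset.exists_max_image Finset.univ
      (fun z => vk k z / vk k'' z) hne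
    have hvkk'' : ∀ z, 0 < vk k'' z := fun z => hvk_pos z k'' hk''0
    have hvkk : ∀ z, 0 < vk k z := fun z => hvk_pos z k hkpos
    set r : ℝ := vk k zs / vk k'' zs with hrdef
    have hr : 0 < r := div_pos (hvkk zs) (hvkk'' zs)
    have hbound : ∀ z, vk k z ≤ r * vk k'' z := by
      intro z
      have := hzs z (Finset.mem_univ z)
      rw [div_le_div_iff₀ (hvkk'' z) (hvkk'' zs)] at this
      rw [hrdef, div_mul_eq_mul_div, le_div_iff₀ (hvkk'' zs)]
      linarith
    have hfk''pos : 0 < f k'' zs :=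
      lt_of_le_of_lt (hf_nonneg zs k' hk'_nonneg)
        (hf_mono zs hk'_nonneg (le_trans hk'_nonneg hk'_lt.le) hk'_lt)
    have hβpos : 0 < β := hβ.1
    have hφkk : 0 < φk k zs := hφk_pos zs k hkpos
    have hφkk'' : 0 < φk k'' zs := hφk_pos zs k'' hk''0
    have hφklt : φk k zs < φk k'' zs := hφk_anti zs hk''0 hkpos hgt
    have hS : 0 < ∑ z', p zs z' * vk k'' z' :=
      Finset.sum_pos (fun z _ => mul_pos (hp_pos zs z) (hvkk'' z)) hne
    have h2 : ∑ z', p zs z' * vk (f k zs) z' ≤ ∑ z', p zs z' * vk k z' := by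
      apply Finset.sum_le_sum
      intro z _
      apply mul_le_mul_of_nonneg_left _ (hp_pos zs z).le
      exact (hvk_anti z).antitoneOn hkpos (lt_of_lt_of_le hkpos (hfk zs)) (hfk zs)
    have h3 : ∑ z', p zs z' * vk k z' ≤ r * ∑ z', p zs z' * vk k'' z' := by
      rw [Finset.mul_sum]
      apply Finset.sum_le_sum
      intro z _
      rw [mul_left_comm]
      exact mul_le_mul_of_nonneg_left (hbound z) (hp_pos zs z).le
    have h5 : ∑ z', p zs z' * vk k'' z' ≤ ∑ z', p zs z' * vk (f k'' zs) z' := by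
      apply Finset.sum_le_sum
      intro z _
      apply mul_le_mul_of_nonneg_left _ (hp_pos zs z).le
      exact (hvk_anti z).antitoneOn hfk''pos hk''0 (hsup zs)
    have hfinal : vk k zs < vk k zs := by
      calc vk k zs = β * φk k zs * ∑ z', p zs z' * vk (f k zs) z' := heuler zs k hkpos
        _ ≤ β * φk k zs * (r * ∑ z', p zs z' * vk k'' z') := by
            apply mul_le_mul_of_nonneg_left (h2.trans h3) (by positivity)
        _ < β * φk k'' zs * (r * ∑ z', p zs z' * vk k'' z') := by
            apply mul_lt_mul_of_pos_right _ (by positivity)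
            exact mul_lt_mul_of_pos_left hφklt hβpos
        _ ≤ β * φk k'' zs * (r * ∑ z', p zs z' * vk (f k'' zs) z') := by
            apply mul_le_mul_of_nonneg_left _ (by positivity)
            exact mul_le_mul_of_nonneg_left h5 hr.le
        _ = r * (β * φk k'' zs * ∑ z', p zs z' * vk (f k'' zs) z') := by ring
        _ = r * vk k'' zs := by rw [← heuler zs k'' hk''0]
        _ = vk k zs := div_mul_cancel₀ _ (hvkk'' zs).ne'
    exact lt_irrefl _ hfinal
end

section
/- Assume ∩_{ξ∈Ξ} I_ξ = ∅, equivalently c_min < c_max. Then there exists a unique probability distribution π on [c_min, c_max] such that, for every initial shock ξ₀ ∈ Ξ and every initial value c₀ ∈ [c_min, c_max], the distributions of c_t converge to π in the uniform metric d as t → ∞. -/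
/-!
Write `F n ξ c r` for the probability that `c_{n+1} ≤ r` when `ξ₀ = ξ` and `c₀ = c`. Conditioning
on the first shock gives `F (n+1) ξ c r = ∑ a, P ξ a * F n a (f c ξ) r`, and since every clamp
`f · ξ` is monotone, `F n ξ c r` is antitone in `c`. Hence on the invariant interval
`[c_min, c_max]` the extreme values of `F n · · r` sit at `c_min` and `c_max`, the upper envelope
decreases and the lower one increases with `n`. The shock `ξs` with `c̄_ξs = c_min` sends the whole
interval to `c_min` and is reached with probability at least `δ > 0` from every state, so the gap
between the envelopes shrinks by the factor `1 - δ` at each step. The common limit is a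
right-continuous distribution function; its measure is `π`. Uniqueness follows by testing the
convergence on a single Markov chain, built from independent random maps.
-/

open MeasureTheory ProbabilityTheory Set Filter Topology

/-- A time-homogeneous Markov chain on a finite state space `E` with one-step transition
probabilities `p`, characterised through the probabilities of finite words. -/
def IsMarkovChain {Ω E : Type*} [MeasurableSpace Ω] (Pr : Measure Ω)
    (p : E → E → ENNReal) (Z : ℕ → Ω → E) : Prop :=
  ∀ (t : ℕ) (w : ℕ → E),
    Pr {ω | ∀ j ≤ t + 1, Z j ω = w j} =
      Pr {ω | ∀ j ≤ t, Z j ω = w j} * p (w t) (w (t + 1))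

open scoped ENNReal

lemma PMF.sum_coe {α : Type*} [Fintype α] (p : PMF α) : ∑ a, p a = 1 := by
  simpa [tsum_fintype] using p.tsum_coe

lemma PMF.sum_toReal {α : Type*} [Fintype α] (p : PMF α) : ∑ a, (p a).toReal = 1 := by
  rw [← ENNReal.toReal_sum fun a _ => p.apply_ne_top a, p.sum_coe, ENNReal.toReal_one]

section DrivenOrbit

variable {Ξ : Type*} (f : ℝ → Ξ → ℝ)

def drivenOrbit (c : ℝ) (w : ℕ → Ξ) : ℕ → ℝ
  | 0 => c
  | t + 1 => f (drivenOrbit c w t) (w t)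

lemma drivenOrbit_succ' (c : ℝ) (w : ℕ → Ξ) (t : ℕ) :
    drivenOrbit f c w (t + 1) = drivenOrbit f (f c (w 0)) (fun j => w (j + 1)) t := by
  induction t with
  | zero => rfl
  | succ t ih => rw [drivenOrbit, ih]; rfl

lemma eq_drivenOrbit {Ω : Type*} {Z : ℕ → Ω → Ξ} {c : ℕ → Ω → ℝ} {c₀ : ℝ}
    (h0 : ∀ ω, c 0 ω = c₀) (hsucc : ∀ t ω, c (t + 1) ω = f (c t ω) (Z t ω)) (t : ℕ) (ω : Ω) :
    c t ω = drivenOrbit f c₀ (fun j => Z j ω) t := by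
  induction t with
  | zero => exact h0 ω
  | succ t ih => rw [hsucc, ih]; rfl

variable [Fintype Ξ]

/-- The law of `drivenOrbit f c w (n + 1)` when `w` is a Markov chain with transitions `P`
started at `ξ`. -/
noncomputable def drivenLaw (P : Ξ → PMF Ξ) : ℕ → Ξ → ℝ → Measure ℝ
  | 0, ξ, c => Measure.dirac (f c ξ)
  | n + 1, ξ, c => ∑ a, P ξ a • drivenLaw P n a (f c ξ)

instance (P : Ξ → PMF Ξ) (n : ℕ) (ξ : Ξ) (c : ℝ) :
    IsProbabilityMeasure (drivenLaw f P n ξ c) := by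
  induction n generalizing ξ c with
  | zero => rw [drivenLaw]; infer_instance
  | succ n ih =>
    constructor
    simp [drivenLaw, PMF.sum_coe]

end DrivenOrbit

lemma measure_eq_sum_measure_fiber_inter {Ω α : Type*} [MeasurableSpace Ω] [Fintype α]
    [MeasurableSpace α] [DiscreteMeasurableSpace α] {X : Ω → α} (hX : Measurable X)
    (μ : Measure Ω) [IsFiniteMeasure μ] (s : Set Ω) : μ s = ∑ x, μ (X ⁻¹' {x} ∩ s) := by
  conv_lhs => rw [← sum_meas_smul_cond_fiber hX μ]
  simp only [Measure.coe_finsetSum, Measure.coe_smul, Finset.sum_apply, Pi.smul_apply,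
    smul_eq_mul]
  exact Finset.sum_congr rfl fun x _ => by
    rw [mul_comm, cond_mul_eq_inter (hX (measurableSet_singleton x))]

lemma measure_comp_mem_eq_dirac {Ω α β : Type*} [MeasurableSpace Ω] [MeasurableSpace α]
    [MeasurableSingletonClass α] [MeasurableSpace β] [MeasurableSingletonClass β]
    {μ : Measure Ω} [IsProbabilityMeasure μ] {X : Ω → α} (hX : Measurable X) {x : α}
    (hx : μ {ω | X ω = x} = 1) (g : α → β) (B : Set β) :
    μ {ω | g (X ω) ∈ B} = Measure.dirac (g x) B := by
  have hae : ∀ᵐ ω ∂μ, X ω = x :=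
    ae_iff.2 ((prob_compl_eq_zero_iff (hX (measurableSet_singleton x))).2 hx)
  have hS : {ω | g (X ω) ∈ B} =ᵐ[μ] ({ω | g x ∈ B} : Set Ω) :=
    eventuallyEq_set.2 (hae.mono fun ω hω => by simp only [mem_ofPred_eq, hω])
  rw [measure_congr hS, Measure.dirac_apply]
  by_cases hB : g x ∈ B <;> simp [hB]

namespace IsMarkovChain

variable {Ω Ξ : Type*} [MeasurableSpace Ω] {Pr : Measure Ω} {p : Ξ → Ξ → ℝ≥0∞}
  {Z : ℕ → Ω → Ξ}

lemma measure_initial_pair (hM : IsMarkovChain Pr p Z) {ξ₀ : Ξ}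
    (h0 : Pr {ω | Z 0 ω = ξ₀} = 1) (a : Ξ) :
    Pr ({ω | Z 0 ω = ξ₀} ∩ {ω | Z 1 ω = a}) = p ξ₀ a := by
  have h := hM 0 (fun j => if j = 0 then ξ₀ else a)
  simp only [zero_add, nonpos_iff_eq_zero, forall_eq, if_pos, one_ne_zero, if_false] at h
  rw [← one_mul (p ξ₀ a), ← h0, ← h]
  congr 1
  ext ω
  simp [Nat.le_one_iff_eq_zero_or_eq_one, or_imp, forall_and]

variable [MeasurableSpace Ξ] [MeasurableSingletonClass Ξ]

lemma cond_shift (hM : IsMarkovChain Pr p Z) (hZ0 : Measurable (Z 0)) (hZ1 : Measurable (Z 1))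
    (ξ₀ a : Ξ) :
    IsMarkovChain (Pr[|{ω | Z 0 ω = ξ₀} ∩ {ω | Z 1 ω = a}]) p (fun t => Z (t + 1)) := by
  intro t w
  have hT : MeasurableSet ({ω | Z 0 ω = ξ₀} ∩ {ω | Z 1 ω = a}) :=
    (hZ0 (measurableSet_singleton ξ₀)).inter (hZ1 (measurableSet_singleton a))
  rw [cond_apply hT, cond_apply hT]
  by_cases hw : w 0 = a
  · set w' : ℕ → Ξ := fun j => if j = 0 then ξ₀ else w (j - 1)
    have hcyl : ∀ s, {ω | Z 0 ω = ξ₀} ∩ {ω | Z 1 ω = a} ∩ {ω | ∀ j ≤ s, Z (j + 1) ω = w j} =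
        {ω | ∀ j ≤ s + 1, Z j ω = w' j} := by
      intro s
      ext ω
      simp only [mem_inter_iff, mem_ofPred_eq]
      constructor
      · rintro ⟨⟨h0, -⟩, h⟩ (_ | j) hj
        · simpa [w'] using h0
        · simpa [w'] using h j (by omega)
      · intro h
        refine ⟨⟨by simpa [w'] using h 0 (by omega), by simpa [w', hw] using h 1 (by omega)⟩,
          fun j hj => by simpa [w'] using h (j + 1) (by omega)⟩
    rw [hcyl, hcyl, hM (t + 1) w', mul_assoc]
    simp [w']
  · have hempty : ∀ s,
        {ω | Z 0 ω = ξ₀} ∩ {ω | Z 1 ω = a} ∩ {ω | ∀ j ≤ s, Z (j + 1) ω = w j} = ∅ := by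
      intro s
      ext ω
      simp only [mem_inter_iff, mem_ofPred_eq, mem_empty_iff_false, iff_false]
      exact fun ⟨⟨_, h1⟩, h⟩ => hw ((h 0 (Nat.zero_le s)).symm.trans h1)
    simp [hempty]

theorem measure_drivenOrbit_mem [IsProbabilityMeasure Pr] [Fintype Ξ] (f : ℝ → Ξ → ℝ)
    (P : Ξ → PMF Ξ) (hZ : ∀ t, Measurable (Z t)) (hM : IsMarkovChain Pr (fun ξ => P ξ) Z)
    {ξ₀ : Ξ} (h0 : Pr {ω | Z 0 ω = ξ₀} = 1) (n : ℕ) (c : ℝ) (B : Set ℝ) :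
    Pr {ω | drivenOrbit f c (fun j => Z j ω) (n + 1) ∈ B} = drivenLaw f P n ξ₀ c B := by
  induction n generalizing Pr Z ξ₀ c with
  | zero => exact measure_comp_mem_eq_dirac (hZ 0) h0 (f c) B
  | succ n ih =>
    have hA : Pr {ω | Z 0 ω = ξ₀}ᶜ = 0 :=
      (prob_compl_eq_zero_iff (hZ 0 (measurableSet_singleton ξ₀))).2 h0
    set S' := {ω | drivenOrbit f (f c ξ₀) (fun j => Z (j + 1) ω) (n + 1) ∈ B}
    have hterm : ∀ a,
        Pr (Z 1 ⁻¹' {a} ∩ {ω | drivenOrbit f c (fun j => Z j ω) (n + 1 + 1) ∈ B}) =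
          P ξ₀ a * drivenLaw f P n a (f c ξ₀) B := by
      intro a
      set T := {ω | Z 0 ω = ξ₀} ∩ {ω | Z 1 ω = a}
      have hT : MeasurableSet T :=
        (hZ 0 (measurableSet_singleton ξ₀)).inter (hZ 1 (measurableSet_singleton a))
      have hPT : Pr T = P ξ₀ a := hM.measure_initial_pair h0 a
      -- on `T` the orbit from `c` is the orbit of the shifted chain from `f c ξ₀`
      have hTS : T ∩ {ω | drivenOrbit f c (fun j => Z j ω) (n + 1 + 1) ∈ B} = T ∩ S' := by
        ext ω
        simp only [T, S', mem_inter_iff, mem_ofPred_eq]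
        constructor <;> rintro ⟨⟨h0, h1⟩, h⟩ <;> refine ⟨⟨h0, h1⟩, ?_⟩ <;>
          simpa [drivenOrbit_succ' f c, h0] using h
      rw [← measure_inter_conull hA, inter_right_comm, inter_comm (Z 1 ⁻¹' {a})]
      change Pr (T ∩ _) = _
      rw [hTS, ← cond_mul_eq_inter hT, hPT, mul_comm]
      rcases eq_or_ne (P ξ₀ a) 0 with hP | hP
      · simp [hP]
      have : IsProbabilityMeasure (Pr[|T]) := cond_isProbabilityMeasure (hPT ▸ hP)
      have hstart : Pr[|T] {ω | Z 1 ω = a} = 1 := by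
        rw [cond_apply hT, inter_eq_left.2 inter_subset_right,
          ENNReal.inv_mul_cancel (hPT ▸ hP) (measure_ne_top Pr T)]
      rw [ih (fun t => hZ (t + 1)) (hM.cond_shift (hZ 0) (hZ 1) ξ₀ a) hstart (f c ξ₀)]
    rw [measure_eq_sum_measure_fiber_inter (hZ 1), drivenLaw, Measure.coe_finsetSum,
      Finset.sum_apply]
    exact Finset.sum_congr rfl fun a _ => hterm a

end IsMarkovChain

section RandomMapChain

variable {Ξ : Type*}

def randomMapChain (ξ₀ : Ξ) : ℕ → (ℕ × Ξ → Ξ) → Ξ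
  | 0, _ => ξ₀
  | t + 1, ω => ω (t, randomMapChain ξ₀ t ω)

lemma randomMapChain_eq_iff {ξ₀ : Ξ} {w : ℕ → Ξ} (hw : w 0 = ξ₀) (ω : ℕ × Ξ → Ξ) (t : ℕ) :
    (∀ j ≤ t, randomMapChain ξ₀ j ω = w j) ↔ ∀ j < t, ω (j, w j) = w (j + 1) := by
  induction t with
  | zero => simpa [randomMapChain] using hw.symm
  | succ t ih =>
    rw [Nat.forall_lt_succ_right, ← ih]
    simp only [Nat.le_succ_iff, or_imp, forall_and, forall_eq, randomMapChain]
    constructor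
    · rintro ⟨h, hsucc⟩
      exact ⟨h, h t le_rfl ▸ hsucc⟩
    · rintro ⟨h, hsucc⟩
      exact ⟨h, (h t le_rfl).symm ▸ hsucc⟩

variable [MeasurableSpace Ξ]

/-- Under this measure the random maps `ω (t, ·)` are independent and `ω (t, ξ)` has law `P ξ`,
so `randomMapChain` is a Markov chain with transitions `P`. -/
noncomputable def randomMapMeasure (P : Ξ → PMF Ξ) : Measure (ℕ × Ξ → Ξ) :=
  Measure.infinitePi fun i => (P i.2).toMeasure

instance (P : Ξ → PMF Ξ) : IsProbabilityMeasure (randomMapMeasure P) := by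
  unfold randomMapMeasure; infer_instance

lemma measurable_randomMapChain [Countable Ξ] [MeasurableSingletonClass Ξ] (ξ₀ : Ξ) (t : ℕ) :
    Measurable (randomMapChain ξ₀ t) := by
  induction t with
  | zero => exact measurable_const
  | succ t ih =>
    have heval : Measurable fun q : (ℕ × Ξ → Ξ) × Ξ => q.1 (t, q.2) :=
      measurable_from_prod_countable_left fun ξ => measurable_pi_apply (t, ξ)
    exact heval.comp (measurable_id.prodMk ih)

lemma randomMapMeasure_cylinder [MeasurableSingletonClass Ξ] (P : Ξ → PMF Ξ) {ξ₀ : Ξ}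
    {w : ℕ → Ξ} (hw : w 0 = ξ₀) (t : ℕ) :
    randomMapMeasure P {ω | ∀ j ≤ t, randomMapChain ξ₀ j ω = w j} =
      ∏ j ∈ Finset.range t, P (w j) (w (j + 1)) := by
  classical
  have hcyl : {ω | ∀ j ≤ t, randomMapChain ξ₀ j ω = w j} =
      (↑((Finset.range t).image fun j => (j, w j)) : Set (ℕ × Ξ)).pi fun i => {w (i.1 + 1)} := by
    ext ω
    simp [randomMapChain_eq_iff hw]
  rw [hcyl, randomMapMeasure, Measure.infinitePi_pi (μ := fun i : ℕ × Ξ => (P i.2).toMeasure)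
    fun _ _ => measurableSet_singleton _,
    Finset.prod_image fun i _ j _ h => congrArg Prod.fst h]
  exact Finset.prod_congr rfl fun j _ =>
    (P (w j)).toMeasure_apply_singleton _ (measurableSet_singleton _)

theorem isMarkovChain_randomMapChain [MeasurableSingletonClass Ξ] (P : Ξ → PMF Ξ) (ξ₀ : Ξ) :
    IsMarkovChain (randomMapMeasure P) (fun ξ => P ξ) (randomMapChain ξ₀) := by
  intro t w
  by_cases hw : w 0 = ξ₀
  · rw [randomMapMeasure_cylinder P hw, randomMapMeasure_cylinder P hw, Finset.prod_range_succ]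
  · have hempty : ∀ s, {ω | ∀ j ≤ s, randomMapChain ξ₀ j ω = w j} = ∅ := fun s =>
      eq_empty_of_forall_notMem fun ω h => hw (h 0 (Nat.zero_le s)).symm
    simp [hempty]

end RandomMapChain

lemma sum_mul_mem_Icc_of_le_weight {ι : Type*} [Fintype ι] {w x : ι → ℝ} {m M δ : ℝ} {s : ι}
    (hw : ∀ i, 0 ≤ w i) (hw1 : ∑ i, w i = 1) (hδ : δ ≤ w s) (hx : ∀ i, x i ∈ Icc m M) :
    ∑ i, w i * x i ∈ Icc (δ * x s + (1 - δ) * m) (δ * x s + (1 - δ) * M) := by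
  classical
  set v : ι → ℝ := fun i => w i - if i = s then δ else 0
  have hv : ∀ i, 0 ≤ v i := fun i => by
    by_cases hi : i = s
    · simp [v, hi, hδ]
    · simp [v, hi, hw i]
  have hv1 : ∑ i, v i = 1 - δ := by simp [v, Finset.sum_sub_distrib, hw1]
  have hsplit : ∑ i, w i * x i = δ * x s + ∑ i, v i * x i := by
    simp [v, sub_mul, Finset.sum_sub_distrib, ite_mul]
  have hlo : ∑ i, v i * m ≤ ∑ i, v i * x i :=
    Finset.sum_le_sum fun i _ => mul_le_mul_of_nonneg_left (hx i).1 (hv i)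
  have hhi : ∑ i, v i * x i ≤ ∑ i, v i * M :=
    Finset.sum_le_sum fun i _ => mul_le_mul_of_nonneg_left (hx i).2 (hv i)
  rw [← Finset.sum_mul, hv1] at hlo hhi
  rw [hsplit]
  exact ⟨by linarith, by linarith⟩

section DrivenCdf

variable {Ξ : Type*} [Fintype Ξ] (f : ℝ → Ξ → ℝ) (P : Ξ → PMF Ξ)

noncomputable def drivenCdf (n : ℕ) (ξ : Ξ) (c r : ℝ) : ℝ := cdf (drivenLaw f P n ξ c) r

lemma drivenCdf_zero (ξ : Ξ) (c r : ℝ) :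
    drivenCdf f P 0 ξ c r = if f c ξ ≤ r then 1 else 0 := by
  rw [drivenCdf, cdf_eq_real]
  simp [drivenLaw, measureReal_def, indicator_apply, apply_ite ENNReal.toReal]

lemma drivenCdf_succ (n : ℕ) (ξ : Ξ) (c r : ℝ) :
    drivenCdf f P (n + 1) ξ c r = ∑ a, (P ξ a).toReal * drivenCdf f P n a (f c ξ) r := by
  simp only [drivenCdf, cdf_eq_real, measureReal_def]
  simp only [drivenLaw, Measure.coe_finsetSum, Measure.coe_smul, Finset.sum_apply, Pi.smul_apply,
    smul_eq_mul]
  rw [ENNReal.toReal_sum fun a _ => ENNReal.mul_ne_top (PMF.apply_ne_top _ _) (measure_ne_top _ _)]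
  simp_rw [ENNReal.toReal_mul]

lemma drivenCdf_mem_Icc (n : ℕ) (ξ : Ξ) (c r : ℝ) : drivenCdf f P n ξ c r ∈ Icc 0 1 :=
  ⟨cdf_nonneg _ r, cdf_le_one _ r⟩

lemma drivenCdf_mono (n : ℕ) (ξ : Ξ) (c : ℝ) : Monotone (drivenCdf f P n ξ c) :=
  (cdf _).mono

lemma drivenLaw_congr {c c' : ℝ} {ξ : Ξ} (h : f c ξ = f c' ξ) (n : ℕ) :
    drivenLaw f P n ξ c = drivenLaw f P n ξ c' := by
  cases n <;> simp only [drivenLaw, h]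

lemma drivenCdf_antitone (hf : ∀ ξ, Monotone (f · ξ)) (n : ℕ) (ξ : Ξ) (r : ℝ) :
    Antitone fun c => drivenCdf f P n ξ c r := by
  induction n generalizing ξ with
  | zero =>
    intro c c' hc
    simp only [drivenCdf_zero]
    split_ifs with h h' <;> first | exact absurd ((hf ξ hc).trans h) h' | norm_num
  | succ n ih =>
    intro c c' hc
    simp only [drivenCdf_succ]
    exact Finset.sum_le_sum fun a _ =>
      mul_le_mul_of_nonneg_left (ih a (hf ξ hc)) ENNReal.toReal_nonneg

end DrivenCdf

section Bounds

variable {Ξ : Type*} [Fintype Ξ] [Nonempty Ξ] (f : ℝ → Ξ → ℝ) (P : Ξ → PMF Ξ)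

noncomputable def drivenCdfSup (lo : ℝ) (n : ℕ) (r : ℝ) : ℝ :=
  Finset.univ.sup' Finset.univ_nonempty fun ξ => drivenCdf f P n ξ lo r

noncomputable def drivenCdfInf (hi : ℝ) (n : ℕ) (r : ℝ) : ℝ :=
  Finset.univ.inf' Finset.univ_nonempty fun ξ => drivenCdf f P n ξ hi r

noncomputable def drivenCdfLim (hi r : ℝ) : ℝ :=
  ⨆ n, drivenCdfInf f P hi n r

noncomputable def doeblinConst (ξs : Ξ) : ℝ :=
  Finset.univ.inf' Finset.univ_nonempty fun ξ => (P ξ ξs).toReal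

variable {f P}

lemma drivenCdf_le_drivenCdfSup (hf : ∀ ξ, Monotone (f · ξ)) {lo c : ℝ} (hc : lo ≤ c) (n : ℕ)
    (ξ : Ξ) (r : ℝ) : drivenCdf f P n ξ c r ≤ drivenCdfSup f P lo n r :=
  (drivenCdf_antitone f P hf n ξ r hc).trans
    (Finset.le_sup' (fun ξ => drivenCdf f P n ξ lo r) (Finset.mem_univ ξ))

lemma drivenCdfInf_le_drivenCdf (hf : ∀ ξ, Monotone (f · ξ)) {hi c : ℝ} (hc : c ≤ hi) (n : ℕ)
    (ξ : Ξ) (r : ℝ) : drivenCdfInf f P hi n r ≤ drivenCdf f P n ξ c r :=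
  (Finset.inf'_le _ (Finset.mem_univ ξ)).trans (drivenCdf_antitone f P hf n ξ r hc)

lemma doeblinConst_le (ξs ξ : Ξ) : doeblinConst P ξs ≤ (P ξ ξs).toReal :=
  Finset.inf'_le _ (Finset.mem_univ ξ)

variable (P) in
lemma doeblinConst_le_one (ξs : Ξ) : doeblinConst P ξs ≤ 1 :=
  (doeblinConst_le ξs ξs).trans (ENNReal.toReal_le_of_le_ofReal zero_le_one (by
    simpa using PMF.coe_le_one _ _))

end Bounds

structure MonotoneDoeblinSystem {Ξ : Type*} (f : ℝ → Ξ → ℝ) (P : Ξ → PMF Ξ) (lo hi : ℝ)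
    (ξs : Ξ) : Prop where
  le : lo ≤ hi
  monotone : ∀ ξ, Monotone (f · ξ)
  mapsTo : ∀ ξ, MapsTo (f · ξ) (Icc lo hi) (Icc lo hi)
  collapse : ∀ c ∈ Icc lo hi, f c ξs = f lo ξs
  pos : ∀ ξ, P ξ ξs ≠ 0

namespace MonotoneDoeblinSystem

variable {Ξ : Type*} [Fintype Ξ] [Nonempty Ξ] {f : ℝ → Ξ → ℝ} {P : Ξ → PMF Ξ} {lo hi : ℝ}
  {ξs : Ξ} (h : MonotoneDoeblinSystem f P lo hi ξs)
include h

lemma drivenCdf_succ_mem {c : ℝ} (hc : c ∈ Icc lo hi) (n : ℕ) (ξ : Ξ) (r : ℝ) :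
    drivenCdf f P (n + 1) ξ c r ∈ Icc (drivenCdfInf f P hi n r) (drivenCdfSup f P lo n r) := by
  have hfc := h.mapsTo ξ hc
  rw [drivenCdf_succ]
  exact (convex_Icc _ _).sum_mem (fun a _ => ENNReal.toReal_nonneg) (by simp [PMF.sum_toReal])
    fun a _ => ⟨drivenCdfInf_le_drivenCdf h.monotone hfc.2 n a r,
      drivenCdf_le_drivenCdfSup h.monotone hfc.1 n a r⟩

lemma drivenCdfInf_monotone (r : ℝ) : Monotone fun n => drivenCdfInf f P hi n r :=
  monotone_nat_of_le_succ fun n => Finset.le_inf' _ _ fun ξ _ =>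
    (h.drivenCdf_succ_mem ⟨h.le, le_rfl⟩ n ξ r).1

lemma drivenCdfSup_antitone (r : ℝ) : Antitone fun n => drivenCdfSup f P lo n r :=
  antitone_nat_of_succ_le fun n => Finset.sup'_le _ _ fun ξ _ =>
    (h.drivenCdf_succ_mem ⟨le_rfl, h.le⟩ n ξ r).2

lemma drivenCdf_mem_of_le {c : ℝ} (hc : c ∈ Icc lo hi) {n m : ℕ} (hnm : n ≤ m) (ξ : Ξ) (r : ℝ) :
    drivenCdf f P m ξ c r ∈ Icc (drivenCdfInf f P hi n r) (drivenCdfSup f P lo n r) :=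
  ⟨(h.drivenCdfInf_monotone r hnm).trans (drivenCdfInf_le_drivenCdf h.monotone hc.2 m ξ r),
    (drivenCdf_le_drivenCdfSup h.monotone hc.1 m ξ r).trans (h.drivenCdfSup_antitone r hnm)⟩

lemma doeblinConst_pos : 0 < doeblinConst P ξs :=
  (Finset.lt_inf'_iff _).2 fun ξ _ => ENNReal.toReal_pos (h.pos ξ) (PMF.apply_ne_top _ _)

lemma tendsto_one_sub_doeblinConst_pow :
    Tendsto (fun n => (1 - doeblinConst P ξs) ^ n) atTop (𝓝 0) :=
  tendsto_pow_atTop_nhds_zero_of_lt_one (by linarith [doeblinConst_le_one P ξs])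
    (by linarith [h.doeblinConst_pos])

/-- Both extreme values give weight at least `doeblinConst P ξs` to the common value
`drivenCdf f P n ξs lo r`. -/
lemma drivenCdfSup_sub_drivenCdfInf_succ_le (n : ℕ) (r : ℝ) :
    drivenCdfSup f P lo (n + 1) r - drivenCdfInf f P hi (n + 1) r ≤
      (1 - doeblinConst P ξs) * (drivenCdfSup f P lo n r - drivenCdfInf f P hi n r) := by
  set δ := doeblinConst P ξs
  have key : ∀ ξ, ∀ c ∈ Icc lo hi, drivenCdf f P (n + 1) ξ c r ∈
      Icc (δ * drivenCdf f P n ξs lo r + (1 - δ) * drivenCdfInf f P hi n r)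
        (δ * drivenCdf f P n ξs lo r + (1 - δ) * drivenCdfSup f P lo n r) := by
    intro ξ c hc
    have hfc := h.mapsTo ξ hc
    have hcommon : drivenCdf f P n ξs (f c ξ) r = drivenCdf f P n ξs lo r := by
      rw [drivenCdf, drivenCdf, drivenLaw_congr f P (h.collapse _ hfc)]
    rw [drivenCdf_succ, ← hcommon]
    exact sum_mul_mem_Icc_of_le_weight (fun a => ENNReal.toReal_nonneg) (PMF.sum_toReal _)
      (doeblinConst_le ξs ξ) fun a => ⟨drivenCdfInf_le_drivenCdf h.monotone hfc.2 n a r,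
        drivenCdf_le_drivenCdfSup h.monotone hfc.1 n a r⟩
  obtain ⟨ξ₁, -, h₁⟩ := Finset.exists_mem_eq_sup' Finset.univ_nonempty
    fun ξ => drivenCdf f P (n + 1) ξ lo r
  obtain ⟨ξ₂, -, h₂⟩ := Finset.exists_mem_eq_inf' Finset.univ_nonempty
    fun ξ => drivenCdf f P (n + 1) ξ hi r
  rw [drivenCdfSup, h₁, drivenCdfInf, h₂]
  linarith [(key ξ₁ lo ⟨le_rfl, h.le⟩).2, (key ξ₂ hi ⟨h.le, le_rfl⟩).1]

lemma drivenCdfSup_sub_drivenCdfInf_le (n : ℕ) (r : ℝ) :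
    drivenCdfSup f P lo n r - drivenCdfInf f P hi n r ≤ (1 - doeblinConst P ξs) ^ n := by
  induction n with
  | zero =>
    have h₁ : drivenCdfSup f P lo 0 r ≤ 1 :=
      Finset.sup'_le _ _ fun ξ _ => (drivenCdf_mem_Icc f P 0 ξ lo r).2
    have h₂ : 0 ≤ drivenCdfInf f P hi 0 r :=
      Finset.le_inf' _ _ fun ξ _ => (drivenCdf_mem_Icc f P 0 ξ hi r).1
    rw [pow_zero]
    linarith
  | succ n ih =>
    calc _ ≤ (1 - doeblinConst P ξs) * (drivenCdfSup f P lo n r - drivenCdfInf f P hi n r) :=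
          h.drivenCdfSup_sub_drivenCdfInf_succ_le n r
      _ ≤ (1 - doeblinConst P ξs) * (1 - doeblinConst P ξs) ^ n :=
          mul_le_mul_of_nonneg_left ih (by linarith [doeblinConst_le_one P ξs])
      _ = _ := (pow_succ' _ _).symm

lemma drivenCdfInf_le_drivenCdfSup (n : ℕ) (r : ℝ) :
    drivenCdfInf f P hi n r ≤ drivenCdfSup f P lo n r :=
  (h.drivenCdf_mem_of_le ⟨le_rfl, h.le⟩ le_rfl ξs r).1.trans
    (h.drivenCdf_mem_of_le ⟨le_rfl, h.le⟩ le_rfl ξs r).2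

lemma drivenCdfInf_le_drivenCdfLim (n : ℕ) (r : ℝ) :
    drivenCdfInf f P hi n r ≤ drivenCdfLim f P hi r :=
  le_ciSup ⟨drivenCdfSup f P lo 0 r, by
    rintro _ ⟨k, rfl⟩
    exact (h.drivenCdfInf_le_drivenCdfSup k r).trans (h.drivenCdfSup_antitone r k.zero_le)⟩ n

lemma drivenCdfLim_le_drivenCdfSup (n : ℕ) (r : ℝ) :
    drivenCdfLim f P hi r ≤ drivenCdfSup f P lo n r :=
  ciSup_le fun k => (h.drivenCdfInf_monotone r (le_max_left k n)).trans <|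
    (h.drivenCdfInf_le_drivenCdfSup _ r).trans (h.drivenCdfSup_antitone r (le_max_right k n))

lemma abs_drivenCdf_sub_drivenCdfLim_le {c : ℝ} (hc : c ∈ Icc lo hi) (n : ℕ) (ξ : Ξ) (r : ℝ) :
    |drivenCdf f P n ξ c r - drivenCdfLim f P hi r| ≤ (1 - doeblinConst P ξs) ^ n := by
  have hmem := h.drivenCdf_mem_of_le hc (le_refl n) ξ r
  have hlo := h.drivenCdfInf_le_drivenCdfLim n r
  have hhi := h.drivenCdfLim_le_drivenCdfSup n r
  have hwidth := h.drivenCdfSup_sub_drivenCdfInf_le n r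
  exact abs_sub_le_iff.2 ⟨by linarith [hmem.2], by linarith [hmem.1]⟩

lemma drivenCdfLim_mono : Monotone (drivenCdfLim f P hi) := fun _ s hrs =>
  ciSup_le fun n => (Finset.le_inf' _ _ fun ξ _ => (Finset.inf'_le _ (Finset.mem_univ ξ)).trans
    (drivenCdf_mono f P n ξ hi hrs)).trans (h.drivenCdfInf_le_drivenCdfLim n s)

lemma drivenCdfLim_continuousWithinAt_Ici (r : ℝ) :
    ContinuousWithinAt (drivenCdfLim f P hi) (Ici r) r := by
  refine continuousWithinAt_of_locally_uniform_approx_of_continuousWithinAt self_mem_Ici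
    fun u hu => ?_
  obtain ⟨ε, hε, hεu⟩ := Metric.mem_uniformity_dist.1 hu
  obtain ⟨n, hn⟩ := (h.tendsto_one_sub_doeblinConst_pow.eventually (gt_mem_nhds hε)).exists
  refine ⟨univ, univ_mem, drivenCdf f P n ξs lo, (cdf _).right_continuous r, fun s _ => hεu ?_⟩
  rw [Real.dist_eq, abs_sub_comm]
  exact (h.abs_drivenCdf_sub_drivenCdfLim_le ⟨le_rfl, h.le⟩ n ξs s).trans_lt hn

lemma drivenCdfLim_of_lt {r : ℝ} (hr : r < lo) : drivenCdfLim f P hi r = 0 := by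
  refine le_antisymm ((h.drivenCdfLim_le_drivenCdfSup 0 r).trans (Finset.sup'_le _ _ fun ξ _ => ?_))
    ((Finset.le_inf' _ _ fun ξ _ => (drivenCdf_mem_Icc f P 0 ξ hi r).1).trans
      (h.drivenCdfInf_le_drivenCdfLim 0 r))
  rw [drivenCdf_zero, if_neg (not_le.2 (hr.trans_le (h.mapsTo ξ ⟨le_rfl, h.le⟩).1))]

lemma drivenCdfLim_of_ge {r : ℝ} (hr : hi ≤ r) : drivenCdfLim f P hi r = 1 := by
  refine le_antisymm ((h.drivenCdfLim_le_drivenCdfSup 0 r).trans (Finset.sup'_le _ _ fun ξ _ =>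
    (drivenCdf_mem_Icc f P 0 ξ lo r).2)) ((Finset.le_inf' _ _ fun ξ _ => ?_).trans
      (h.drivenCdfInf_le_drivenCdfLim 0 r))
  rw [drivenCdf_zero, if_pos ((h.mapsTo ξ ⟨h.le, le_rfl⟩).2.trans hr)]

noncomputable def limitCdf : StieltjesFunction ℝ where
  toFun := drivenCdfLim f P hi
  mono' := h.drivenCdfLim_mono
  right_continuous' := h.drivenCdfLim_continuousWithinAt_Ici

lemma tendsto_limitCdf_atBot : Tendsto h.limitCdf atBot (𝓝 0) :=
  tendsto_const_nhds.congr' <| (eventually_lt_atBot lo).mono fun _ hr =>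
    (h.drivenCdfLim_of_lt hr).symm

lemma tendsto_limitCdf_atTop : Tendsto h.limitCdf atTop (𝓝 1) :=
  tendsto_const_nhds.congr' <| (eventually_ge_atTop hi).mono fun _ hr =>
    (h.drivenCdfLim_of_ge hr).symm

noncomputable def limitLaw : Measure ℝ := h.limitCdf.measure

lemma isProbabilityMeasure_limitLaw : IsProbabilityMeasure h.limitLaw :=
  h.limitCdf.isProbabilityMeasure h.tendsto_limitCdf_atBot h.tendsto_limitCdf_atTop

lemma limitLaw_Iic_toReal (r : ℝ) : (h.limitLaw (Iic r)).toReal = drivenCdfLim f P hi r := by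
  have := h.isProbabilityMeasure_limitLaw
  rw [← measureReal_def, ← cdf_eq_real, limitLaw,
    cdf_measure_stieltjesFunction _ h.tendsto_limitCdf_atBot h.tendsto_limitCdf_atTop]
  rfl

lemma limitLaw_Icc : h.limitLaw (Icc lo hi) = 1 := by
  have hleft : Function.leftLim h.limitCdf lo = 0 := by
    refine leftLim_eq_of_tendsto (tendsto_const_nhds.congr' ?_)
    filter_upwards [self_mem_nhdsWithin] with r hr using (h.drivenCdfLim_of_lt hr).symm
  rw [limitLaw, StieltjesFunction.measure_Icc, hleft, sub_zero]
  simp [show h.limitCdf hi = 1 from h.drivenCdfLim_of_ge le_rfl]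

end MonotoneDoeblinSystem

lemma ext_of_forall_abs_sub_toReal_Iic_le {μ ν : Measure ℝ} [IsFiniteMeasure μ]
    [IsFiniteMeasure ν] (F : ℕ → ℝ → ℝ)
    (hμ : ∀ ε > (0 : ℝ), ∃ t₀ : ℕ, ∀ t ≥ t₀, ∀ r, |F t r - (μ (Iic r)).toReal| ≤ ε)
    (hν : ∀ ε > (0 : ℝ), ∃ t₀ : ℕ, ∀ t ≥ t₀, ∀ r, |F t r - (ν (Iic r)).toReal| ≤ ε) :
    μ = ν := by
  refine Measure.ext_of_Iic μ ν fun r => (ENNReal.toReal_eq_toReal_iff' (measure_ne_top _ _)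
    (measure_ne_top _ _)).1 (eq_of_forall_dist_le fun ε hε => ?_)
  obtain ⟨t₁, h₁⟩ := hμ (ε / 2) (half_pos hε)
  obtain ⟨t₂, h₂⟩ := hν (ε / 2) (half_pos hε)
  have hμr := abs_le.1 (h₁ (max t₁ t₂) (le_max_left _ _) r)
  have hνr := abs_le.1 (h₂ (max t₁ t₂) (le_max_right _ _) r)
  rw [Real.dist_eq, abs_le]
  constructor <;> linarith [hμr.1, hμr.2, hνr.1, hνr.2]

lemma monotoneDoeblinSystem_of_clamp {Ξ : Type*} [Fintype Ξ] [Nonempty Ξ] {cl cu : Ξ → ℝ}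
    (hle : ∀ ξ, cl ξ ≤ cu ξ) {f : ℝ → Ξ → ℝ}
    (hf : ∀ c ξ, f c ξ = if cu ξ < c then cu ξ else if c < cl ξ then cl ξ else c)
    {P : Ξ → PMF Ξ} (hP : ∀ ξ ξ', P ξ ξ' ≠ 0)
    (hlt : Finset.univ.inf' Finset.univ_nonempty cu ≤ Finset.univ.sup' Finset.univ_nonempty cl) :
    ∃ ξs, MonotoneDoeblinSystem f P (Finset.univ.inf' Finset.univ_nonempty cu)
      (Finset.univ.sup' Finset.univ_nonempty cl) ξs := by
  set lo := Finset.univ.inf' Finset.univ_nonempty cu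
  set hi := Finset.univ.sup' Finset.univ_nonempty cl
  have hclamp : ∀ c ξ, f c ξ = max (cl ξ) (min c (cu ξ)) := by
    intro c ξ
    rw [hf]
    split_ifs with h₁ h₂
    · rw [min_eq_right h₁.le, max_eq_right (hle ξ)]
    · rw [min_eq_left (not_lt.1 h₁), max_eq_left h₂.le]
    · rw [min_eq_left (not_lt.1 h₁), max_eq_right (not_lt.1 h₂)]
  have hlo : ∀ ξ, lo ≤ cu ξ := fun ξ => Finset.inf'_le _ (Finset.mem_univ ξ)
  have hhi : ∀ ξ, cl ξ ≤ hi := fun ξ => Finset.le_sup' _ (Finset.mem_univ ξ)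
  obtain ⟨ξs, -, hξs⟩ := Finset.exists_mem_eq_inf' Finset.univ_nonempty cu
  replace hξs : cu ξs = lo := hξs.symm
  have hcollapse : ∀ c, lo ≤ c → f c ξs = lo := fun c hc => by
    rw [hclamp, hξs, min_eq_right hc, max_eq_right (hξs ▸ hle ξs)]
  refine ⟨ξs, hlt, fun ξ a b hab => ?_, fun ξ c hc => ?_,
    fun c hc => (hcollapse c hc.1).trans (hcollapse lo le_rfl).symm, fun ξ => hP ξ ξs⟩
  · simp only [hclamp]
    exact max_le_max le_rfl (min_le_min hab le_rfl)
  · simp only [hclamp]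
    exact ⟨le_max_of_le_right (le_min hc.1 (hlo ξ)), max_le (hhi ξ) ((min_le_left _ _).trans hc.2)⟩

section Stability

variable {Ξ : Type} [Fintype Ξ] [MeasurableSpace Ξ] [MeasurableSingletonClass Ξ]

def IsUniformLimitLaw (f : ℝ → Ξ → ℝ) (P : Ξ → PMF Ξ) (lo hi : ℝ) (π : Measure ℝ) : Prop :=
  ∀ (Ω : Type) [MeasurableSpace Ω] (Pr : Measure Ω), IsProbabilityMeasure Pr →
    ∀ (Z : ℕ → Ω → Ξ), (∀ t, Measurable (Z t)) → IsMarkovChain Pr (fun ξ => P ξ) Z →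
    ∀ ξ₀ : Ξ, Pr {ω | Z 0 ω = ξ₀} = 1 →
    ∀ c₀ ∈ Icc lo hi,
    ∀ (c : ℕ → Ω → ℝ), (∀ ω, c 0 ω = c₀) → (∀ t ω, c (t + 1) ω = f (c t ω) (Z t ω)) →
    ∀ ε > (0 : ℝ), ∃ t₀ : ℕ, ∀ t ≥ t₀, ∀ r : ℝ,
      |(Pr {ω | c t ω ≤ r}).toReal - (π (Iic r)).toReal| ≤ ε

namespace MonotoneDoeblinSystem

variable [Nonempty Ξ] {f : ℝ → Ξ → ℝ} {P : Ξ → PMF Ξ} {lo hi : ℝ} {ξs : Ξ}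
  (h : MonotoneDoeblinSystem f P lo hi ξs)
include h

theorem isUniformLimitLaw_limitLaw : IsUniformLimitLaw f P lo hi h.limitLaw := by
  intro Ω _ Pr _ Z hZ hM ξ₀ h0 c₀ hc₀ c hc0 hcs ε hε
  obtain ⟨N, hN⟩ :=
    eventually_atTop.1 (h.tendsto_one_sub_doeblinConst_pow.eventually (ge_mem_nhds hε))
  refine ⟨N + 1, fun t ht r => ?_⟩
  obtain ⟨n, rfl⟩ : ∃ n, t = n + 1 := ⟨t - 1, by omega⟩
  have hlaw := hM.measure_drivenOrbit_mem f P hZ h0 n c₀ (Iic r)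
  have hclose := h.abs_drivenCdf_sub_drivenCdfLim_le hc₀ n ξ₀ r
  rw [drivenCdf, cdf_eq_real, measureReal_def, ← hlaw] at hclose
  simp_rw [eq_drivenOrbit f hc0 hcs, h.limitLaw_Iic_toReal]
  exact hclose.trans (hN n (by omega))

theorem eq_limitLaw_of_isUniformLimitLaw {π : Measure ℝ} [IsProbabilityMeasure π]
    (hπ : IsUniformLimitLaw f P lo hi π) : π = h.limitLaw := by
  have := h.isProbabilityMeasure_limitLaw
  have hstart : randomMapMeasure P {ω | randomMapChain ξs 0 ω = ξs} = 1 := by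
    simp [randomMapChain]
  set c : ℕ → (ℕ × Ξ → Ξ) → ℝ := fun t ω => drivenOrbit f lo (fun j => randomMapChain ξs j ω) t
  have hlim : ∀ π, IsUniformLimitLaw f P lo hi π →
      ∀ ε > (0 : ℝ), ∃ t₀ : ℕ, ∀ t ≥ t₀, ∀ r : ℝ,
        |(randomMapMeasure P {ω | c t ω ≤ r}).toReal - (π (Iic r)).toReal| ≤ ε :=
    fun π hπ => hπ _ _ inferInstance _ (measurable_randomMapChain ξs)
      (isMarkovChain_randomMapChain P ξs) ξs hstart lo ⟨le_rfl, h.le⟩ c (fun _ => rfl)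
      fun _ _ => rfl
  exact ext_of_forall_abs_sub_toReal_Iic_le _ (hlim π hπ) (hlim _ h.isUniformLimitLaw_limitLaw)

end MonotoneDoeblinSystem

end Stability

/-- **stability in the limited-commitment risk-sharing model.**
If the first best is not sustainable, i.e. `∩_ξ I_ξ = ∅`, equivalently
`c_min < c_max`, then there is a unique probability distribution `π` on
`[c_min, c_max]` such that for every initial shock `ξ₀` and every initial value
`c₀ ∈ [c_min, c_max]` the distributions of the consumption process
`c_{t+1} = f(c_t, ξ_t)` (driven by a Markov chain with all transition probabilities
positive) converge to `π` in the uniform metric. -/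
theorem stmt16
    {Ξ : Type} [Fintype Ξ] [Nonempty Ξ] [MeasurableSpace Ξ] [MeasurableSingletonClass Ξ]
    (cl cu : Ξ → ℝ) (hlecu : ∀ ξ, cl ξ ≤ cu ξ)
    (f : ℝ → Ξ → ℝ)
    (hf : ∀ (c : ℝ) (ξ : Ξ),
      f c ξ = if cu ξ < c then cu ξ else if c < cl ξ then cl ξ else c)
    (cmin cmax : ℝ)
    (hcmin : cmin = Finset.univ.inf' Finset.univ_nonempty cu)
    (hcmax : cmax = Finset.univ.sup' Finset.univ_nonempty cl)
    (hlt : cmin < cmax)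
    (p : Ξ → Ξ → ENNReal) (hp_pos : ∀ ξ ξ', 0 < p ξ ξ') (hp_sum : ∀ ξ, ∑ ξ', p ξ ξ' = 1) :
    ∃! π : Measure ℝ, IsProbabilityMeasure π ∧ π (Icc cmin cmax) = 1 ∧
      ∀ (Ω : Type) [MeasurableSpace Ω] (Pr : Measure Ω), IsProbabilityMeasure Pr →
      ∀ (Z : ℕ → Ω → Ξ), (∀ t, Measurable (Z t)) → IsMarkovChain Pr p Z →
      ∀ ξ₀ : Ξ, Pr {ω | Z 0 ω = ξ₀} = 1 →
      ∀ c₀ ∈ Icc cmin cmax,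
      ∀ (c : ℕ → Ω → ℝ), (∀ ω, c 0 ω = c₀) →
        (∀ t ω, c (t + 1) ω = f (c t ω) (Z t ω)) →
      ∀ ε > (0:ℝ), ∃ t₀ : ℕ, ∀ t ≥ t₀, ∀ r : ℝ,
        |(Pr {ω | c t ω ≤ r}).toReal - (π (Iic r)).toReal| ≤ ε := by
  obtain ⟨P, rfl⟩ : ∃ P : Ξ → PMF Ξ, (fun ξ => ⇑(P ξ)) = p :=
    ⟨fun ξ => PMF.ofFintype (p ξ) (hp_sum ξ), by ext; simp⟩
  subst hcmin hcmax
  obtain ⟨ξs, h⟩ := monotoneDoeblinSystem_of_clamp hlecu hf (fun ξ ξ' => (hp_pos ξ ξ').ne') hlt.le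
  have := h.isProbabilityMeasure_limitLaw
  refine ⟨h.limitLaw, ⟨this, h.limitLaw_Icc, h.isUniformLimitLaw_limitLaw⟩, ?_⟩
  rintro π ⟨hπ, -, hlim⟩
  exact h.eq_limitLaw_of_isUniformLimitLaw hlim
end

section
/- Assume ∩_{ξ∈Ξ} I_ξ ≠ ∅, equivalently c_max ≤ c_min (so ∩_ξ I_ξ = [c_max, c_min]). Then for every (deterministic) sequence of shocks (ξ_t)_{t≥0} in Ξ and every initial value c₀ ∈ ℝ, the sequence defined by c_{t+1} = f(c_t, ξ_t) is monotone — nonincreasing if c₀ ≥ c_max, nondecreasing if c₀ ≤ c_min, and constant if c₀ ∈ [c_max, c_min] — and hence converges. If moreover every ξ ∈ Ξ occurs infinitely often in the sequence (ξ_t), then the limit lies in [c_max, c_min] and the sequence c_t is eventually constant. -/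
open Set Filter Topology

/-- **monotone convergence to the first best in the risk-sharing model.**
Assume `∩_ξ I_ξ ≠ ∅`, i.e. `c_max ≤ c_min`.  Then for every deterministic shock sequence
`(ξ_t)` and every initial value `c₀`, the sequence `c_{t+1} = f(c_t, ξ_t)` is monotone —
nonincreasing if `c₀ ≥ c_max`, nondecreasing if `c₀ ≤ c_min`, constant if
`c₀ ∈ [c_max, c_min]` — and hence converges; if moreover every shock occurs infinitely
often, the limit lies in `[c_max, c_min]` and the sequence is eventually constant. -/
theorem stmt17
    {Ξ : Type*} [Fintype Ξ] [Nonempty Ξ]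
    (cl cu : Ξ → ℝ) (hlecu : ∀ ξ, cl ξ ≤ cu ξ)
    (f : ℝ → Ξ → ℝ)
    (hf : ∀ (c : ℝ) (ξ : Ξ),
      f c ξ = if cu ξ < c then cu ξ else if c < cl ξ then cl ξ else c)
    (cmin cmax : ℝ)
    (hcmin : cmin = Finset.univ.inf' Finset.univ_nonempty cu)
    (hcmax : cmax = Finset.univ.sup' Finset.univ_nonempty cl)
    (hle : cmax ≤ cmin)
    (ξseq : ℕ → Ξ) (c₀ : ℝ) (c : ℕ → ℝ)
    (hc0 : c 0 = c₀)
    (hcrec : ∀ t, c (t + 1) = f (c t) (ξseq t)) :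
    (cmax ≤ c₀ → Antitone c) ∧
    (c₀ ≤ cmin → Monotone c) ∧
    (c₀ ∈ Icc cmax cmin → ∀ t, c t = c₀) ∧
    ∃ Lim : ℝ, Tendsto c atTop (𝓝 Lim) ∧
      ((∀ ξ : Ξ, {t : ℕ | ξseq t = ξ}.Infinite) →
        Lim ∈ Icc cmax cmin ∧ ∃ t₀ : ℕ, ∀ t ≥ t₀, c t = c t₀) := by
  have hclmax : ∀ ξ, cl ξ ≤ cmax := fun ξ =>
    hcmax ▸ Finset.le_sup' cl (Finset.mem_univ ξ)
  have hcumin : ∀ ξ, cmin ≤ cu ξ := fun ξ =>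
    hcmin ▸ Finset.inf'_le cu (Finset.mem_univ ξ)
  -- one-step facts
  have hstep_hi : ∀ t, cmax ≤ c t → cmax ≤ c (t + 1) ∧ c (t + 1) ≤ c t := by
    intro t h
    rw [hcrec, hf]
    split_ifs with h1 h2
    · exact ⟨le_trans hle (hcumin _), le_of_lt h1⟩
    · exact absurd (lt_of_lt_of_le h2 (le_trans (hclmax _) h)) (lt_irrefl _)
    · exact ⟨h, le_refl _⟩
  have hstep_lo : ∀ t, c t ≤ cmin → c (t + 1) ≤ cmin ∧ c t ≤ c (t + 1) := by
    intro t h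
    rw [hcrec, hf]
    split_ifs with h1 h2
    · exact absurd (lt_of_lt_of_le h1 (h.trans (hcumin _))) (lt_irrefl _)
    · exact ⟨le_trans (hclmax _) hle, le_of_lt h2⟩
    · exact ⟨h, le_refl _⟩
  have hhi : cmax ≤ c₀ → ∀ t, cmax ≤ c t := by
    intro h t
    induction t with
    | zero => rw [hc0]; exact h
    | succ n ih => exact (hstep_hi n ih).1
  have hlo : c₀ ≤ cmin → ∀ t, c t ≤ cmin := by
    intro h t
    induction t with
    | zero => rw [hc0]; exact h
    | succ n ih => exact (hstep_lo n ih).1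
  have hanti : cmax ≤ c₀ → Antitone c := fun h =>
    antitone_nat_of_succ_le fun n => (hstep_hi n (hhi h n)).2
  have hmono : c₀ ≤ cmin → Monotone c := fun h =>
    monotone_nat_of_le_succ fun n => (hstep_lo n (hlo h n)).2
  -- once in the interval, the sequence is frozen
  have hfix : ∀ t, c t ∈ Icc cmax cmin → c (t + 1) = c t := by
    intro t ⟨h1, h2⟩
    rw [hcrec, hf]
    split_ifs with ha hb
    · exact absurd (lt_of_le_of_lt (le_trans h2 (hcumin _)) ha) (lt_irrefl _)
    · exact absurd (lt_of_lt_of_le hb (le_trans (hclmax _) h1)) (lt_irrefl _)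
    · rfl
  have hfrozen : ∀ t, c t ∈ Icc cmax cmin → ∀ s, c (t + s) = c t := by
    intro t ht s
    induction s with
    | zero => rfl
    | succ n ih =>
      have : c (t + n) ∈ Icc cmax cmin := ih ▸ ht
      rw [show t + (n + 1) = (t + n) + 1 from rfl, hfix _ this, ih]
  have hconst : c₀ ∈ Icc cmax cmin → ∀ t, c t = c₀ := by
    intro h t
    have h0 : c 0 ∈ Icc cmax cmin := hc0 ▸ h
    have := hfrozen 0 h0 t
    rw [zero_add] at this
    rw [this, hc0]
  refine ⟨hanti, hmono, hconst, ?_⟩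
  -- eventually-constant helper
  have hevconst : ∀ L : ℝ, Tendsto c atTop (𝓝 L) →
      (∀ ξ : Ξ, {t : ℕ | ξseq t = ξ}.Infinite) →
      (∃ t₁, c t₁ ∈ Icc cmax cmin) →
      L ∈ Icc cmax cmin ∧ ∃ t₀ : ℕ, ∀ t ≥ t₀, c t = c t₀ := by
    rintro L hL _ ⟨t₁, ht₁⟩
    have heq : ∀ t ≥ t₁, c t = c t₁ := by
      intro t ht
      obtain ⟨s, rfl⟩ := Nat.exists_eq_add_of_le ht
      exact hfrozen t₁ ht₁ s
    have hL' : Tendsto c atTop (𝓝 (c t₁)) := by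
      apply tendsto_atTop_of_eventually_const heq
    have : L = c t₁ := tendsto_nhds_unique hL hL'
    exact ⟨this ▸ ht₁, t₁, heq⟩
  rcases le_total c₀ cmin with hc | hc
  · -- monotone case, bounded above by cmin
    have hm := hmono hc
    have hbdd : BddAbove (Set.range c) := ⟨cmin, by rintro x ⟨t, rfl⟩; exact hlo hc t⟩
    refine ⟨⨆ t, c t, tendsto_atTop_ciSup hm hbdd, ?_⟩
    intro hinf
    apply hevconst _ (tendsto_atTop_ciSup hm hbdd) hinf
    -- find a shock achieving the sup of cl
    obtain ⟨ξ', -, hξ'⟩ := Finset.exists_mem_eq_sup' (Finset.univ_nonempty (α := Ξ)) cl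
    obtain ⟨t, ht⟩ := (hinf ξ').nonempty
    refine ⟨t + 1, ?_, hlo hc (t + 1)⟩
    rw [hcrec, ht, hf]
    split_ifs with ha hb
    · exact le_trans hle (hcumin _)
    · rw [hcmax, hξ']
    · rw [hcmax, hξ'] at *; exact le_of_not_gt hb
  · -- antitone case, bounded below by cmax
    have hc' : cmax ≤ c₀ := le_trans hle hc
    have hm := hanti hc'
    have hbdd : BddBelow (Set.range c) := ⟨cmax, by rintro x ⟨t, rfl⟩; exact hhi hc' t⟩
    refine ⟨⨅ t, c t, tendsto_atTop_ciInf hm hbdd, ?_⟩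
    intro hinf
    apply hevconst _ (tendsto_atTop_ciInf hm hbdd) hinf
    obtain ⟨ξ', -, hξ'⟩ := Finset.exists_mem_eq_inf' (Finset.univ_nonempty (α := Ξ)) cu
    obtain ⟨t, ht⟩ := (hinf ξ').nonempty
    refine ⟨t + 1, hhi hc' (t + 1), ?_⟩
    rw [hcrec, ht, hf]
    split_ifs with ha hb
    · rw [hcmin, hξ']
    · exact le_trans (hclmax _) hle
    · rw [hcmin, hξ'] at *; exact le_of_not_gt ha
end
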